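/- arXiv:1004.4293 — 5 statements merged into one kernel-verified Lean document; each statement's English description precedes it below -/
import Mathlib

section
/- With a_q(n) the number of q-admissible black/white colorings of a cycle of length n, for n ≥ q+1 we have a_q(n) = a_q(n-1) + a_q(n-q) + q if n ≡ 1 (mod q), and a_q(n) = a_q(n-1) + a_q(n-q) otherwise. -/
/-- A coloring `c` of the cycle `ZMod n` (`true` = black) is `q`-admissible if
at least one bead is black and between any two cyclically consecutive black
beads the number of white beads is divisible by `q`.  The gap `d` from a black
bead to the next black bead has `d - 1` white beads strictly between. -/
def Admissible (q n : ℕ) (c : ZMod n → Bool) : Prop :=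
  (∃ i, c i = true) ∧
  ∀ i : ZMod n, c i = true → ∀ d : ℕ, 0 < d → c (i + (d : ZMod n)) = true →
    (∀ e : ℕ, 0 < e → e < d → c (i + (e : ZMod n)) = false) → q ∣ (d - 1)

/-!
Reading the gaps between consecutive black beads from the first black bead `mark` turns an
admissible coloring into a composition of `n` into parts `≡ 1 (mod q)`, marked by `mark`, which
must be smaller than the last part (the gap wrapping around `0`). Sort the marked compositions of
`n` by their first part: a single part `n` (`n` marks, possible iff `q ∣ n - 1`), a first part `1`
(delete it: a marked composition of `n - 1`), or a first part `≥ q + 1` (subtract `q`: a marked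
composition of `n - q` with at least two parts). The marked compositions of `n - q` with a single
part contribute `n - q` exactly when `q ∣ n - 1`, whence the correction `n - (n - q) = q`.
-/

open Nat Function

theorem Nat.nth_add_one_eq_iff_of_infinite {p : ℕ → Prop} (hp : (Set.ofPred p).Infinite) {j m : ℕ} :
    nth p (j + 1) = m ↔ nth p j < m ∧ p m ∧ ∀ x, nth p j < x → x < m → ¬p x := by
  constructor
  · rintro rfl
    exact ⟨nth_strictMono hp j.lt_succ_self, nth_mem_of_infinite hp _,
      fun x hjx hx hpx => (le_nth_of_lt_nth_succ hx hpx).not_gt hjx⟩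
  · rintro ⟨hjm, hm, hgap⟩
    refine le_antisymm (not_lt.1 fun hlt => ?_) (not_lt.1 fun hlt => ?_)
    · exact (le_nth_of_lt_nth_succ hlt hm).not_gt hjm
    · exact hgap _ (nth_strictMono hp j.lt_succ_self) hlt (nth_mem_of_infinite hp _)

namespace Function.Periodic

variable {p : ℕ → Prop} {n : ℕ}

theorem infinite_setOf (hp : Periodic p n) (hn : n ≠ 0) {m : ℕ}
    (hm : p m) : (Set.ofPred p).Infinite :=
  Set.infinite_of_forall_exists_gt fun a =>
    ⟨m + (a + 1) * n, by
      rw [Set.mem_ofPred_eq, ← Nat.cast_id (a + 1), hp.nat_mul]; exact hm,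
      by nlinarith [Nat.one_le_iff_ne_zero.2 hn]⟩

variable [DecidablePred p]

theorem count_add (hp : Periodic p n) (m : ℕ) :
    count p (m + n) = count p m + count p n := by
  have hshift : (fun k => p (k + n)) = p := funext hp
  simp only [count_add', hshift]

theorem nth_add_count (hp : Periodic p n) (hinf : (Set.ofPred p).Infinite)
    (j : ℕ) : nth p (j + count p n) = nth p j + n := by
  have hmem : p (nth p j + n) := by rw [hp]; exact nth_mem_of_infinite hinf j
  rw [← nth_count hmem, hp.count_add, count_nth_of_infinite hinf]

end Function.Periodic

theorem ZMod.natCast_eq_natCast_iff_of_lt {a m n : ℕ} (ha : a < n) (hm : m < a + n) :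
    (a : ZMod n) = m ↔ a = m := by
  refine ⟨fun h => ?_, congrArg _⟩
  rw [ZMod.natCast_eq_natCast_iff', Nat.mod_eq_of_lt ha] at h
  have := Nat.div_add_mod m n
  rcases Nat.eq_zero_or_pos (m / n) with h0 | h0
  · simp only [h0, mul_zero, zero_add] at this; omega
  · have := Nat.le_mul_of_pos_right n h0; omega

theorem List.sum_map_range_sub {t : ℕ → ℕ} (ht : Monotone t) (j : ℕ) :
    ((List.range j).map fun i => t (i + 1) - t i).sum = t j - t 0 := by
  induction j with
  | zero => simp
  | succ j ih =>
    rw [List.sum_range_succ, ih]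
    have := ht (Nat.zero_le j); have := ht (Nat.le_add_right j 1)
    omega

theorem Composition.sizeUpTo_lt_sizeUpTo_iff {n i j : ℕ} (c : Composition n) (hi : i ≤ c.length)
    (hj : j ≤ c.length) : c.sizeUpTo i < c.sizeUpTo j ↔ i < j :=
  c.boundary.lt_iff_lt (a := ⟨i, by omega⟩) (b := ⟨j, by omega⟩)

theorem List.sum_take_length_sub_one_cons (g : ℕ) {l : List ℕ} (hl : l ≠ []) :
    ((g :: l).take ((g :: l).length - 1)).sum = g + (l.take (l.length - 1)).sum := by
  cases l with
  | nil => exact absurd rfl hl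
  | cons a l => simp

theorem Nat.card_subtype_add_card_subtype_not {α : Type*} [Finite α] (p : α → Prop) :
    Nat.card {a // p a} + Nat.card {a // ¬p a} = Nat.card α := by
  classical
  rw [← Nat.card_sum, Nat.card_congr (Equiv.sumCompl p)]

section Coloring

variable {q n : ℕ} {c : ZMod n → Bool}

/-- Pulled back along `ℕ → ZMod n`, the black beads form a periodic set, which `Nat.nth` enumerates
in increasing order; the wrap-around of the cycle is then absorbed by periodicity. -/
abbrev IsBlack (c : ZMod n → Bool) (m : ℕ) : Prop := c m = true

theorem isBlack_periodic (c : ZMod n → Bool) : Periodic (IsBlack c) n := fun m => by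
  simp [IsBlack]

variable [NeZero n]

theorem admissible_iff_nat : Admissible q n c ↔ (∃ m, IsBlack c m) ∧
    ∀ m d, IsBlack c m → 0 < d → IsBlack c (m + d) →
      (∀ e, 0 < e → e < d → ¬IsBlack c (m + e)) → q ∣ d - 1 := by
  simp only [Admissible, IsBlack, Bool.not_eq_true, Nat.cast_add]
  refine and_congr ⟨fun ⟨i, hi⟩ => ⟨i.val, by simpa using hi⟩, fun ⟨m, hm⟩ => ⟨m, hm⟩⟩
    ⟨fun h m d hm => h m hm d, fun h i hi d => ?_⟩
  rw [← ZMod.natCast_zmod_val i] at hi ⊢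
  exact h i.val d hi

theorem isBlack_infinite (hc : ∃ m, IsBlack c m) : (Set.ofPred (IsBlack c)).Infinite :=
  hc.elim fun _ hm => (isBlack_periodic c).infinite_setOf (NeZero.ne n) hm

theorem count_isBlack_pos (hc : ∃ m, IsBlack c m) : 0 < count (IsBlack c) n := by
  obtain ⟨m, hm⟩ := hc
  refine Nat.pos_of_ne_zero (count_ne_iff_exists.2 ⟨m % n, Nat.mod_lt _ (NeZero.pos n), ?_⟩)
  rwa [(isBlack_periodic c).map_mod_nat]

theorem admissible_iff_nth : Admissible q n c ↔ (∃ m, IsBlack c m) ∧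
    ∀ j < count (IsBlack c) n, q ∣ nth (IsBlack c) (j + 1) - nth (IsBlack c) j - 1 := by
  rw [admissible_iff_nat]
  refine and_congr_right fun hc => ?_
  have hinf := isBlack_infinite hc
  have hnext := fun j m => nth_add_one_eq_iff_of_infinite (j := j) (m := m) hinf
  constructor
  · intro h j _
    obtain ⟨hlt, hmem, hgap⟩ := (hnext j _).1 rfl
    refine h _ _ (nth_mem_of_infinite hinf j) (by omega) (by rwa [Nat.add_sub_cancel' hlt.le])
      fun e he hed => hgap _ (by omega) (by omega)
  · intro h m d hm hd hmd hgap
    have hgap_periodic : Periodic (fun j => nth (IsBlack c) (j + 1) - nth (IsBlack c) j)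
        (count (IsBlack c) n) := fun j => by
      simp only [Nat.add_right_comm j, (isBlack_periodic c).nth_add_count hinf]
      omega
    have hj := nth_count hm
    have hsucc : nth (IsBlack c) (count (IsBlack c) m + 1) = m + d := by
      refine (hnext _ _).2 ⟨by omega, hmd, fun x hx hxd hx' => ?_⟩
      rw [hj] at hx
      exact hgap (x - m) (by omega) (by omega) (by rwa [Nat.add_sub_cancel' hx.le])
    have := h _ (Nat.mod_lt (count (IsBlack c) m) (count_isBlack_pos hc))
    rw [hgap_periodic.map_mod_nat, hsucc, hj, Nat.add_sub_cancel_left] at this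
    exact this

noncomputable def gapComposition (c : ZMod n → Bool) (hc : ∃ m, IsBlack c m) : Composition n where
  blocks := (List.range (count (IsBlack c) n)).map fun j =>
    nth (IsBlack c) (j + 1) - nth (IsBlack c) j
  blocks_pos := by
    simp only [List.mem_map, List.mem_range]
    rintro _ ⟨j, -, rfl⟩
    exact Nat.sub_pos_of_lt (nth_strictMono (isBlack_infinite hc) j.lt_succ_self)
  blocks_sum := by
    have hperiod := (isBlack_periodic c).nth_add_count (isBlack_infinite hc) 0
    rw [zero_add] at hperiod
    rw [List.sum_map_range_sub (nth_monotone (isBlack_infinite hc)), hperiod,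
      Nat.add_sub_cancel_left]

section

variable (hc : ∃ m, IsBlack c m)

theorem gapComposition_length : (gapComposition c hc).length = count (IsBlack c) n := by
  simp [gapComposition, Composition.length]

theorem gapComposition_sizeUpTo {j : ℕ} (hj : j ≤ count (IsBlack c) n) :
    (gapComposition c hc).sizeUpTo j = nth (IsBlack c) j - nth (IsBlack c) 0 := by
  rw [Composition.sizeUpTo, gapComposition, ← List.map_take, List.take_range, min_eq_left hj,
    List.sum_map_range_sub (nth_monotone (isBlack_infinite hc))]

end

end Coloring

/-- The coloring encoded by a marked composition has its black beads at `mark + sizeUpTo j`;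
`mark_add_lt` says that they all lie in `[0, n)`, i.e. that `mark` is less than the last part. -/
structure MarkedComposition (q n : ℕ) where
  toComposition : Composition n
  mark : ℕ
  dvd_sub_one : ∀ g ∈ toComposition.blocks, q ∣ g - 1
  mark_add_lt : mark + toComposition.sizeUpTo (toComposition.length - 1) < n

namespace MarkedComposition

variable {q m n : ℕ}

@[ext]
theorem ext_blocks {x y : MarkedComposition q n}
    (hblocks : x.toComposition.blocks = y.toComposition.blocks) (hmark : x.mark = y.mark) :
    x = y := by
  cases x; cases y; cases hmark; congr; exact Composition.ext hblocks

theorem mark_lt (x : MarkedComposition q n) : x.mark < n :=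
  (Nat.le_add_right _ _).trans_lt x.mark_add_lt

theorem pos (x : MarkedComposition q n) : 0 < n := (Nat.zero_le _).trans_lt x.mark_lt

instance : Finite (MarkedComposition q n) :=
  Finite.of_injective (fun x => (x.toComposition, (⟨x.mark, x.mark_lt⟩ : Fin n))) fun x y h => by
    simp only [Prod.mk.injEq, Fin.mk.injEq] at h
    exact ext_blocks (congrArg Composition.blocks h.1) h.2

section Decode

variable (x : MarkedComposition q n)

def position (j : ℕ) : ℕ := x.mark + x.toComposition.sizeUpTo j

def toColoring : ZMod n → Bool :=
  fun i => decide (∃ j < x.toComposition.length, (x.position j : ZMod n) = i)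

theorem position_lt {j : ℕ} (hj : j < x.toComposition.length) : x.position j < n :=
  (Nat.add_le_add_left (x.toComposition.monotone_sizeUpTo (Nat.le_sub_one_of_lt hj)) _).trans_lt
    x.mark_add_lt

theorem position_le (j : ℕ) : x.position j ≤ x.mark + n :=
  Nat.add_le_add_left (x.toComposition.sizeUpTo_le j) _

theorem position_length : x.position x.toComposition.length = x.mark + n := by
  simp [position]

theorem position_lt_position_iff {i j : ℕ} (hi : i ≤ x.toComposition.length)
    (hj : j ≤ x.toComposition.length) : x.position i < x.position j ↔ i < j := by
  rw [position, position, Nat.add_lt_add_iff_left, x.toComposition.sizeUpTo_lt_sizeUpTo_iff hi hj]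

theorem mark_le_position (j : ℕ) : x.mark ≤ x.position j := Nat.le_add_right _ _

theorem isBlack_toColoring_iff {m : ℕ} (hm : m < x.mark + n) :
    IsBlack x.toColoring m ↔ ∃ j < x.toComposition.length, x.position j = m := by
  simp only [IsBlack, toColoring, decide_eq_true_eq]
  refine exists_congr fun j => and_congr_right fun hj => ?_
  exact ZMod.natCast_eq_natCast_iff_of_lt (x.position_lt hj) (by linarith [x.mark_le_position j])

end Decode

section Bijection

variable [NeZero n] (x : MarkedComposition q n)

noncomputable def ofColoring (c : ZMod n → Bool) (hc : Admissible q n c) :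
    MarkedComposition q n where
  toComposition := gapComposition c (admissible_iff_nth.1 hc).1
  mark := nth (IsBlack c) 0
  dvd_sub_one := by
    simp only [gapComposition, List.mem_map, List.mem_range]
    rintro _ ⟨j, hj, rfl⟩
    exact (admissible_iff_nth.1 hc).2 j hj
  mark_add_lt := by
    have hc' := (admissible_iff_nth.1 hc).1
    have hpos := count_isBlack_pos hc'
    rw [gapComposition_length, gapComposition_sizeUpTo hc' (by omega),
      Nat.add_sub_cancel' (nth_monotone (isBlack_infinite hc') (Nat.zero_le _))]
    exact nth_lt_of_lt_count (by omega)

theorem isBlack_toColoring_mark : IsBlack x.toColoring x.mark :=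
  (x.isBlack_toColoring_iff (by simpa using NeZero.pos n)).2
    ⟨0, x.toComposition.length_pos_iff.2 (NeZero.pos n), by simp [position]⟩

theorem nth_isBlack_toColoring {j : ℕ} (hj : j ≤ x.toComposition.length) :
    nth (IsBlack x.toColoring) j = x.position j := by
  induction j with
  | zero =>
    have hcount : count (IsBlack x.toColoring) x.mark = 0 := count_of_forall_not fun m hm hbl => by
      obtain ⟨i, -, rfl⟩ := (x.isBlack_toColoring_iff (by omega)).1 hbl
      exact (x.mark_le_position i).not_gt hm
    simpa [hcount, position] using nth_count x.isBlack_toColoring_mark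
  | succ j ih =>
    rw [nth_add_one_eq_iff_of_infinite (isBlack_infinite ⟨_, x.isBlack_toColoring_mark⟩),
      ih (by omega)]
    refine ⟨(x.position_lt_position_iff (by omega) hj).2 j.lt_succ_self, ?_, fun m hjm hmj hm => ?_⟩
    · rcases hj.lt_or_eq with hj | hj
      · exact (x.isBlack_toColoring_iff (by linarith [x.position_lt hj])).2 ⟨_, hj, rfl⟩
      · rw [hj, position_length, IsBlack, Nat.cast_add, ZMod.natCast_self, add_zero]
        exact x.isBlack_toColoring_mark
    · obtain ⟨i, hi, rfl⟩ := (x.isBlack_toColoring_iff (hmj.trans_le (x.position_le _))).1 hm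
      rw [x.position_lt_position_iff (by omega) hi.le] at hjm
      rw [x.position_lt_position_iff hi.le hj] at hmj
      omega

theorem count_isBlack_toColoring :
    count (IsBlack x.toColoring) n = x.toComposition.length := by
  have hinf := isBlack_infinite ⟨_, x.isBlack_toColoring_mark⟩
  have hlen := x.toComposition.length_pos_iff.2 (NeZero.pos n)
  refine le_antisymm ((count_le_iff_le_nth hinf).2 ?_)
    (Nat.le_of_pred_lt ((lt_nth_iff_count_lt hinf).2 ?_))
  · rw [x.nth_isBlack_toColoring le_rfl, position_length]
    exact Nat.le_add_left _ _
  · rw [x.nth_isBlack_toColoring (Nat.pred_le _)]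
    exact x.position_lt (Nat.pred_lt hlen.ne')

theorem nth_succ_sub_nth_isBlack_toColoring {j : ℕ} (hj : j < x.toComposition.length) :
    nth (IsBlack x.toColoring) (j + 1) - nth (IsBlack x.toColoring) j =
      x.toComposition.blocks[j] := by
  rw [x.nth_isBlack_toColoring hj, x.nth_isBlack_toColoring hj.le, position, position,
    x.toComposition.sizeUpTo_succ hj]
  omega

theorem admissible_toColoring : Admissible q n x.toColoring := by
  refine admissible_iff_nth.2 ⟨⟨_, x.isBlack_toColoring_mark⟩, fun j hj => ?_⟩
  rw [count_isBlack_toColoring] at hj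
  rw [x.nth_succ_sub_nth_isBlack_toColoring hj]
  exact x.dvd_sub_one _ (List.getElem_mem _)

theorem ofColoring_toColoring : ofColoring x.toColoring x.admissible_toColoring = x := by
  ext1
  · apply List.ext_getElem
    · simp [ofColoring, gapComposition, count_isBlack_toColoring, Composition.length]
    · intro j _ hj
      simp only [ofColoring, gapComposition, List.getElem_map, List.getElem_range]
      exact x.nth_succ_sub_nth_isBlack_toColoring hj
  · simpa [ofColoring, position] using x.nth_isBlack_toColoring (Nat.zero_le _)

theorem toColoring_ofColoring (c : ZMod n → Bool) (hc : Admissible q n c) :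
    (ofColoring c hc).toColoring = c := by
  have hc' := (admissible_iff_nth.1 hc).1
  have hinf := isBlack_infinite hc'
  have hposition : ∀ j < count (IsBlack c) n, (ofColoring c hc).position j = nth (IsBlack c) j :=
    fun j hj => by
      rw [position, ofColoring, gapComposition_sizeUpTo hc' hj.le]
      exact Nat.add_sub_cancel' (nth_monotone hinf (Nat.zero_le _))
  have hlength : (ofColoring c hc).toComposition.length = count (IsBlack c) n :=
    gapComposition_length hc'
  funext i
  refine Bool.eq_iff_iff.2 ?_
  simp only [toColoring, hlength, decide_eq_true_eq]
  constructor
  · rintro ⟨j, hj, rfl⟩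
    rw [hposition j hj]
    exact nth_mem_of_infinite hinf j
  · intro hi
    have hblack : IsBlack c i.val := by rwa [IsBlack, ZMod.natCast_zmod_val]
    have hj := count_strict_mono hblack (ZMod.val_lt i)
    exact ⟨_, hj, by rw [hposition _ hj, nth_count hblack, ZMod.natCast_zmod_val]⟩

noncomputable def admissibleEquiv :
    {c : ZMod n → Bool // Admissible q n c} ≃ MarkedComposition q n where
  toFun c := ofColoring c.1 c.2
  invFun x := ⟨x.toColoring, x.admissible_toColoring⟩
  left_inv c := Subtype.ext (toColoring_ofColoring c.1 c.2)
  right_inv := ofColoring_toColoring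

end Bijection

def head (x : MarkedComposition q n) : ℕ := x.toComposition.blocks.headD 0

theorem blocks_eq_cons (x : MarkedComposition q n) :
    x.toComposition.blocks = x.head :: x.toComposition.blocks.tail := by
  have := (x.toComposition.blocks_eq_nil).not.2 x.pos.ne'
  cases h : x.toComposition.blocks with
  | nil => exact absurd h this
  | cons g l => simp [head, h]

theorem head_mem (x : MarkedComposition q n) : x.head ∈ x.toComposition.blocks := by
  rw [blocks_eq_cons]; exact List.mem_cons_self

theorem head_add_sum_tail (x : MarkedComposition q n) :
    x.head + x.toComposition.blocks.tail.sum = n := by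
  conv_rhs => rw [← x.toComposition.blocks_sum, blocks_eq_cons, List.sum_cons]

theorem add_one_le_head (x : MarkedComposition q n) (hx : x.head ≠ 1) : q + 1 ≤ x.head := by
  have hpos := x.toComposition.blocks_pos x.head_mem
  have := Nat.le_of_dvd (by omega) (x.dvd_sub_one _ x.head_mem)
  omega

def cons (g : ℕ) (hg : 0 < g) (hgq : q ∣ g - 1) (y : MarkedComposition q m) (h : g + m = n) :
    MarkedComposition q n where
  toComposition :=
    { blocks := g :: y.toComposition.blocks
      blocks_pos := by
        rintro i (_ | ⟨_, hi⟩)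
        exacts [hg, y.toComposition.blocks_pos hi]
      blocks_sum := by simp [h] }
  mark := y.mark
  dvd_sub_one := List.forall_mem_cons.2 ⟨hgq, y.dvd_sub_one⟩
  mark_add_lt := by
    have := y.mark_add_lt
    simp only [Composition.sizeUpTo, Composition.length] at this ⊢
    rw [List.sum_take_length_sub_one_cons _ (y.toComposition.blocks_eq_nil.not.2 y.pos.ne')]
    omega

def tail (x : MarkedComposition q n) (hx : x.toComposition.length ≠ 1) (h : x.head + m = n) :
    MarkedComposition q m where
  toComposition :=
    { blocks := x.toComposition.blocks.tail
      blocks_pos := fun hi => x.toComposition.blocks_pos (List.mem_of_mem_tail hi)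
      blocks_sum := by have := x.head_add_sum_tail; omega }
  mark := x.mark
  dvd_sub_one := fun g hg => x.dvd_sub_one g (List.mem_of_mem_tail hg)
  mark_add_lt := by
    have := x.mark_add_lt
    have hne : x.toComposition.blocks.tail ≠ [] := by
      rw [Composition.length, blocks_eq_cons, List.length_cons, ne_eq, Nat.add_eq_right] at hx
      exact List.ne_nil_of_length_pos (Nat.pos_of_ne_zero hx)
    simp only [Composition.sizeUpTo, Composition.length] at this ⊢
    rw [blocks_eq_cons, List.sum_take_length_sub_one_cons _ hne] at this
    omega

section
variable {g : ℕ} {hg : 0 < g} {hgq : q ∣ g - 1} {y : MarkedComposition q m} {h : g + m = n}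

@[simp] theorem blocks_cons :
    (cons g hg hgq y h).toComposition.blocks = g :: y.toComposition.blocks := rfl
@[simp] theorem head_cons : (cons g hg hgq y h).head = g := rfl

theorem length_cons_ne_one : (cons g hg hgq y h).toComposition.length ≠ 1 := by
  simpa [Composition.length] using y.toComposition.blocks_eq_nil.not.2 y.pos.ne'

end

def headEqOneEquiv : {x : MarkedComposition q n // x.toComposition.length ≠ 1 ∧ x.head = 1} ≃
    MarkedComposition q (n - 1) where
  toFun x := x.1.tail x.2.1 (by have := x.1.head_add_sum_tail; omega)
  invFun y := ⟨cons 1 one_pos (by simp) y (by have := y.pos; omega), length_cons_ne_one, rfl⟩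
  left_inv := by
    rintro ⟨x, hx, hhead⟩
    ext1
    ext1
    · show 1 :: x.toComposition.blocks.tail = x.toComposition.blocks
      rw [← hhead]
      exact x.blocks_eq_cons.symm
    · rfl
  right_inv y := rfl

def headNeOneEquiv (hq : 0 < q) :
    {x : MarkedComposition q n // x.toComposition.length ≠ 1 ∧ x.head ≠ 1} ≃
      {y : MarkedComposition q (n - q) // y.toComposition.length ≠ 1} where
  toFun x :=
    have hhead := x.1.add_one_le_head x.2.2
    have hsum := x.1.head_add_sum_tail
    ⟨cons (x.1.head - q) (by omega)
      (by rw [Nat.sub_right_comm]; exact Nat.dvd_sub (x.1.dvd_sub_one _ x.1.head_mem) dvd_rfl)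
      (x.1.tail x.2.1 (m := n - x.1.head) (by omega)) (by omega), length_cons_ne_one⟩
  invFun y :=
    have hsum := y.1.head_add_sum_tail
    have hpos := y.1.pos
    have hhead := y.1.toComposition.blocks_pos y.1.head_mem
    ⟨cons (y.1.head + q) (by omega)
      (by rw [Nat.sub_add_comm (by omega)]
          exact Nat.dvd_add (y.1.dvd_sub_one _ y.1.head_mem) dvd_rfl)
      (y.1.tail y.2 (m := n - q - y.1.head) (by omega)) (by omega), length_cons_ne_one,
      by rw [head_cons]; omega⟩
  left_inv x := by
    have hhead := x.1.add_one_le_head x.2.2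
    ext1
    ext1
    · simp only [blocks_cons, head_cons, Nat.sub_add_cancel (by omega : q ≤ x.1.head)]
      exact x.1.blocks_eq_cons.symm
    · rfl
  right_inv y := by
    ext1
    ext1
    · simp only [blocks_cons, head_cons, Nat.add_sub_cancel]
      exact y.1.blocks_eq_cons.symm
    · rfl

theorem blocks_eq_singleton (x : MarkedComposition q n) (hx : x.toComposition.length = 1) :
    x.toComposition.blocks = [n] := by
  rw [(Composition.eq_single_iff_length x.pos).2 hx, Composition.single_blocks]

theorem card_length_eq_one :
    Nat.card {x : MarkedComposition q n // x.toComposition.length = 1} =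
      if q ∣ n - 1 then n else 0 := by
  split_ifs with hdvd
  · refine (Nat.card_congr ?_).trans (Nat.card_fin n)
    exact
      { toFun := fun x => ⟨x.1.mark, x.1.mark_lt⟩
        invFun := fun b =>
          ⟨⟨Composition.single n b.pos, b, by simpa using hdvd, by simp⟩,
            Composition.single_length b.pos⟩
        left_inv := fun x => Subtype.ext (ext_blocks (x.1.blocks_eq_singleton x.2).symm rfl)
        right_inv := fun b => rfl }
  · have : IsEmpty {x : MarkedComposition q n // x.toComposition.length = 1} :=
      ⟨fun x => hdvd (x.1.dvd_sub_one n (by simp [x.1.blocks_eq_singleton x.2]))⟩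
    exact Nat.card_of_isEmpty

theorem card_eq_card_sub_one_add_card_sub (hq : 0 < q) (hn : q < n) :
    Nat.card (MarkedComposition q n) =
      Nat.card (MarkedComposition q (n - 1)) + Nat.card (MarkedComposition q (n - q)) +
        if q ∣ n - 1 then q else 0 := by
  have hsplit := fun k => Nat.card_subtype_add_card_subtype_not
    (fun x : MarkedComposition q k => x.toComposition.length = 1)
  simp only [← ne_eq] at hsplit
  have hrest : Nat.card {x : MarkedComposition q n // x.toComposition.length ≠ 1} =
      Nat.card (MarkedComposition q (n - 1)) +
        Nat.card {y : MarkedComposition q (n - q) // y.toComposition.length ≠ 1} := by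
    rw [← Nat.card_congr headEqOneEquiv, ← Nat.card_congr (headNeOneEquiv hq),
      ← Nat.card_subtype_add_card_subtype_not
        (fun x : {x : MarkedComposition q n // x.toComposition.length ≠ 1} => x.1.head = 1)]
    congr 1
    · exact Nat.card_congr (Equiv.subtypeSubtypeEquivSubtypeInter
        (fun x : MarkedComposition q n => x.toComposition.length ≠ 1) (fun x => x.head = 1))
    · exact Nat.card_congr (Equiv.subtypeSubtypeEquivSubtypeInter
        (fun x : MarkedComposition q n => x.toComposition.length ≠ 1) (fun x => x.head ≠ 1))
  have hdvd : q ∣ n - q - 1 ↔ q ∣ n - 1 := by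
    rw [show n - 1 = n - q - 1 + q by omega, Nat.dvd_add_self_right]
  rw [← hsplit n, ← hsplit (n - q), hrest, card_length_eq_one, card_length_eq_one]
  simp only [hdvd]
  split_ifs <;> omega

end MarkedComposition

/-- The recurrence for the number of `q`-admissible colorings for `n ≥ q+1`. -/
theorem stmt2 (q n : ℕ) (hq : 1 ≤ q) (hn : q + 1 ≤ n) :
    Nat.card {c : ZMod n → Bool // Admissible q n c} =
      if n % q = 1 % q then
        Nat.card {c : ZMod (n - 1) → Bool // Admissible q (n - 1) c} +
          Nat.card {c : ZMod (n - q) → Bool // Admissible q (n - q) c} + q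
      else
        Nat.card {c : ZMod (n - 1) → Bool // Admissible q (n - 1) c} +
          Nat.card {c : ZMod (n - q) → Bool // Admissible q (n - q) c} := by
  have : NeZero n := ⟨by omega⟩
  have : NeZero (n - 1) := ⟨by omega⟩
  have : NeZero (n - q) := ⟨by omega⟩
  have hmod : n % q = 1 % q ↔ q ∣ n - 1 := eq_comm.trans (Nat.modEq_iff_dvd' (by omega))
  simp only [Nat.card_congr MarkedComposition.admissibleEquiv, hmod,
    MarkedComposition.card_eq_card_sub_one_add_card_sub hq hn]
  split_ifs <;> rfl
end

section
/- Define a(n) by a(0)=0, a(1)=a(2)=1, and a(n) = a(n-1) + a(n-2) + 1 - (-1)^n for n ≥ 3. Then a(n) equals the number of 2-admissible black/white colorings of a cycle of length n (at least one black bead, an even number of white beads between any two cyclically consecutive black beads, rotations/reflections distinct). -/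
/-
Read the cycle with a three-state automaton: a bead is black, or white with an odd or an even
number of white beads since the last black one. A coloring is 2-admissible exactly when some
bead is black and the state sequence never goes from "odd white" to black, so admissible
colorings are the closed walks of length `n` through black in the graph black → black,
black → odd, odd → even, even → odd, even → black. Closed walks are counted by `tr (M ^ n)` for
the transfer matrix `M`; those avoiding black alternate between the two white states, giving
`1 + (-1) ^ n`. Since `M ^ 3 = M ^ 2 + M`, the traces are the Lucas numbers and the count is
`L n - 1 - (-1) ^ n`.
-/

section CyclicWalks

variable {S : Type*} (R : S → S → Prop)

def transferMatrix [DecidableRel R] : Matrix S S ℕ :=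
  Matrix.of fun x y => if R x y then 1 else 0

def IsWalk {k : ℕ} (p : Fin (k + 1) → S) : Prop := ∀ i : Fin k, R (p i.castSucc) (p i.succ)

theorem card_walk_eq_transferMatrix_pow [Fintype S] [DecidableEq S] [DecidableRel R]
    (k : ℕ) (x y : S) :
    Nat.card {p : Fin (k + 1) → S // p 0 = x ∧ p (Fin.last k) = y ∧ IsWalk R p} =
      (transferMatrix R ^ k) x y := by
  induction k generalizing x with
  | zero =>
    by_cases hxy : x = y
    · subst hxy
      have : Unique {p : Fin 1 → S // p 0 = x ∧ p (Fin.last 0) = x ∧ IsWalk R p} :=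
        ⟨⟨⟨fun _ => x, rfl, rfl, Fin.elim0⟩⟩, fun p => Subtype.ext <| funext fun i => by
          rw [Subsingleton.elim i 0]; exact p.2.1⟩
      rw [pow_zero, Matrix.one_apply_eq]
      exact Nat.card_unique
    · have : IsEmpty {p : Fin 1 → S // p 0 = x ∧ p 0 = y ∧ IsWalk R p} :=
        ⟨fun p => hxy (p.2.1.symm.trans p.2.2.1)⟩
      simp [hxy]
  | succ k ih =>
    let e : {p : Fin (k + 2) → S // p 0 = x ∧ p (Fin.last (k + 1)) = y ∧ IsWalk R p} ≃
        Σ z, {q : Fin (k + 1) → S // R x z ∧ q 0 = z ∧ q (Fin.last k) = y ∧ IsWalk R q} :=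
      { toFun := fun p => ⟨p.1 1, Fin.tail p.1, by
          obtain ⟨p, rfl, rfl, hp⟩ := p
          exact ⟨hp 0, rfl, rfl, fun i => hp i.succ⟩⟩
        invFun := fun q => ⟨Fin.cons x q.2.1, by
          obtain ⟨z, q, hxz, rfl, rfl, hq⟩ := q
          refine ⟨rfl, rfl, Fin.cases hxz fun i => hq i⟩⟩
        left_inv := fun p => Subtype.ext <| by
          obtain ⟨p, rfl, -⟩ := p
          exact Fin.cons_self_tail p
        right_inv := fun q => by
          obtain ⟨z, q, hxz, rfl, hq⟩ := q
          rfl }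
    rw [Nat.card_congr e, Nat.card_sigma, pow_succ', Matrix.mul_apply]
    refine Finset.sum_congr rfl fun z _ => ?_
    by_cases hxz : R x z <;> simp [transferMatrix, hxz, ih]

theorem isWalk_snoc_iff {k : ℕ} (p : Fin (k + 1) → S) :
    IsWalk R (Fin.snoc (α := fun _ => S) p (p 0)) ↔ ∀ i, R (p i) (p (i + 1)) := by
  rw [IsWalk, Fin.forall_fin_succ', Fin.forall_fin_succ']
  simp only [Fin.snoc_castSucc, Fin.succ_castSucc, Fin.succ_last, Fin.snoc_last,
    Fin.coeSucc_eq_succ, Fin.last_add_one]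

def IsCyclicWalk {n : ℕ} (p : ZMod n → S) : Prop := ∀ i, R (p i) (p (i + 1))

theorem card_isCyclicWalk_eq_trace [Fintype S] [DecidableEq S] [DecidableRel R] {n : ℕ}
    (hn : n ≠ 0) :
    Nat.card {p : ZMod n → S // IsCyclicWalk R p} = (transferMatrix R ^ n).trace := by
  obtain ⟨k, rfl⟩ := Nat.exists_eq_add_one.2 (Nat.pos_of_ne_zero hn)
  let e : {p : Fin (k + 1) → S // ∀ i, R (p i) (p (i + 1))} ≃
      Σ x, {q : Fin (k + 2) → S // q 0 = x ∧ q (Fin.last (k + 1)) = x ∧ IsWalk R q} :=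
    { toFun := fun p => ⟨p.1 0, Fin.snoc p.1 (p.1 0), by simp, by simp,
        (isWalk_snoc_iff R p.1).2 p.2⟩
      invFun := fun q => ⟨Fin.init q.2.1, by
        obtain ⟨x, q, h0, hlast, hq⟩ := q
        rw [← isWalk_snoc_iff]
        convert hq
        simp [Fin.init, h0, ← hlast]⟩
      left_inv := fun p => Subtype.ext (Fin.init_snoc (α := fun _ => S) _ _)
      right_inv := fun q => by
        obtain ⟨x, q, rfl, hlast, hq⟩ := q
        refine Sigma.subtype_ext (by simp [Fin.init]) ?_
        change Fin.snoc (α := fun _ => S) (Fin.init q) (Fin.init q 0) = q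
        convert Fin.snoc_init_self (α := fun _ => S) q using 2
        simp [Fin.init, hlast] }
  change Nat.card {p : Fin (k + 1) → S // ∀ i, R (p i) (p (i + 1))} = _
  rw [Matrix.trace, Nat.card_congr e, Nat.card_sigma]
  exact Finset.sum_congr rfl fun x _ => card_walk_eq_transferMatrix_pow R (k + 1) x x

def cyclicWalkSubtypeEquiv {n : ℕ} (P : S → Prop) :
    {w : {p : ZMod n → S // IsCyclicWalk R p} // ∀ i, P (w.1 i)} ≃
      {q : ZMod n → Subtype P // IsCyclicWalk (fun x y : Subtype P => R x y) q} where
  toFun w := ⟨fun i => ⟨w.1.1 i, w.2 i⟩, w.1.2⟩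
  invFun q := ⟨⟨fun i => q.1 i, q.2⟩, fun i => (q.1 i).2⟩
  left_inv _ := rfl
  right_inv _ := rfl

end CyclicWalks

/-- The state of a bead: white beads record the parity of the white run ending at them. -/
inductive Bead
  | black
  | whiteOdd
  | whiteEven
  deriving DecidableEq

namespace Bead

instance : Fintype Bead := ⟨{black, whiteOdd, whiteEven}, fun b => by cases b <;> decide⟩

def next : Bead → Bool → Bead
  | _, true => black
  | whiteOdd, false => whiteEven
  | _, false => whiteOdd

def Step : Bead → Bead → Prop
  | black, black | black, whiteOdd | whiteOdd, whiteEven | whiteEven, whiteOdd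
  | whiteEven, black => True
  | _, _ => False

instance : DecidableRel Step := fun x y => by
  cases x <;> cases y <;> unfold Step <;> infer_instance

theorem step_next_iff (x : Bead) (b : Bool) :
    Step x (x.next b) ↔ ¬(x = whiteOdd ∧ b = true) := by
  cases x <;> cases b <;> decide

theorem next_decide_eq_black_of_step {x y : Bead} (h : Step x y) :
    x.next (decide (y = black)) = y := by
  cases x <;> cases y <;> first | rfl | exact h.elim

def afterWhites : ℕ → Bead
  | 0 => black
  | m + 1 => (afterWhites m).next false

theorem afterWhites_eq_whiteOdd_iff (m : ℕ) : afterWhites m = whiteOdd ↔ Odd m := by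
  induction m with
  | zero => simp [afterWhites]
  | succ m ih =>
    rw [Nat.odd_add_one, ← ih, afterWhites]
    cases afterWhites m <;> decide

variable {n : ℕ} {c : ZMod n → Bool} {p q : ZMod n → Bead}

def Tracks (c : ZMod n → Bool) (p : ZMod n → Bead) : Prop :=
  ∀ i, p (i + 1) = (p i).next (c (i + 1))

theorem Tracks.eq_black_iff (hp : Tracks c p) (i : ZMod n) : p i = black ↔ c i = true := by
  rw [← sub_add_cancel i 1, hp]
  cases c (i - 1 + 1) <;> cases p (i - 1) <;> decide

theorem Tracks.apply_add_eq_afterWhites (hp : Tracks c p) {i : ZMod n} (hi : p i = black) {m : ℕ}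
    (hw : ∀ e : ℕ, 0 < e → e ≤ m → c (i + e) = false) : p (i + m) = afterWhites m := by
  induction m with
  | zero => simpa [afterWhites] using hi
  | succ m ih =>
    rw [Nat.cast_succ, ← add_assoc, hp, ih fun e he1 he2 => hw e he1 (by omega), afterWhites,
      add_assoc, ← Nat.cast_succ, hw (m + 1) (by omega) le_rfl]

theorem Tracks.unique [NeZero n] (hp : Tracks c p) (hq : Tracks c q) {j : ZMod n}
    (hj : c j = true) : p = q := by
  have h : ∀ m : ℕ, p (j + m) = q (j + m) := by
    intro m
    induction m with
    | zero =>
      rw [Nat.cast_zero, add_zero]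
      exact ((hp.eq_black_iff j).2 hj).trans ((hq.eq_black_iff j).2 hj).symm
    | succ m ih => rw [Nat.cast_succ, ← add_assoc, hp, hq, ih]
  funext i
  simpa using h (i - j).val

def trackFrom (c : ZMod n → Bool) (j : ZMod n) : ℕ → Bead
  | 0 => black
  | m + 1 => (trackFrom c j m).next (c (j + (m + 1 : ℕ)))

theorem trackFrom_periodic [NeZero n] {j : ZMod n} (hj : c j = true) :
    Function.Periodic (trackFrom c j) n := by
  intro m
  induction m with
  | zero =>
    obtain ⟨k, hk⟩ := Nat.exists_eq_add_one.2 (NeZero.pos n)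
    have hcast : ((k + 1 : ℕ) : ZMod n) = 0 := by rw [← hk, ZMod.natCast_self]
    rw [zero_add, congrArg (trackFrom c j) hk]
    show (trackFrom c j k).next (c (j + ((k + 1 : ℕ) : ZMod n))) = black
    rw [hcast, add_zero, hj]
    rfl
  | succ m ih =>
    rw [Nat.add_right_comm, trackFrom, trackFrom, ih]
    push_cast [ZMod.natCast_self]
    ring_nf

theorem exists_tracks [NeZero n] {j : ZMod n} (hj : c j = true) : ∃ p, Tracks c p := by
  have hrep : ∀ m : ℕ, trackFrom c j (((j + m) - j).val) = trackFrom c j m := by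
    intro m
    rw [add_sub_cancel_left, ZMod.val_natCast, (trackFrom_periodic hj).map_mod_nat]
  refine ⟨fun i => trackFrom c j (i - j).val, fun i => ?_⟩
  obtain ⟨m, rfl⟩ : ∃ m : ℕ, i = j + m := ⟨(i - j).val, by simp⟩
  dsimp only
  rw [add_assoc, ← Nat.cast_succ, hrep, hrep, trackFrom]

theorem Tracks.admissible_iff [NeZero n] (hp : Tracks c p) {j : ZMod n} (hj : c j = true) :
    Admissible 2 n c ↔ ∀ i, Step (p i) (p (i + 1)) := by
  simp only [hp _, step_next_iff, not_and]
  constructor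
  · intro hadm i hodd hblack
    obtain ⟨m, rfl⟩ : ∃ m : ℕ, i = j + m := ⟨(i - j).val, by simp⟩
    -- `j + m'` is the last black bead up to `i`: admissibility makes the white run from it to
    -- `i` even, while `p i = whiteOdd` makes it odd.
    set m' := Nat.findGreatest (fun k => c (j + k) = true) m
    have hle : m' ≤ m := Nat.findGreatest_le m
    have hblack' : c (j + m') = true := Nat.findGreatest_spec (P := fun k => c (j + k) = true)
      (Nat.zero_le m) (by simpa using hj)
    have hwhite : ∀ e : ℕ, 0 < e → e ≤ m - m' → c (j + m' + e) = false := by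
      intro e he1 he2
      have := Nat.findGreatest_is_greatest (P := fun k => c (j + k) = true) (n := m)
        (k := m' + e) (by omega) (by omega)
      simpa [add_assoc] using this
    have hsplit : j + (m' : ZMod n) + ((m - m' : ℕ) : ZMod n) = j + m := by
      push_cast [Nat.cast_sub hle]; ring
    have hrun := hp.apply_add_eq_afterWhites ((hp.eq_black_iff _).2 hblack') hwhite
    rw [hsplit, hodd, eq_comm, afterWhites_eq_whiteOdd_iff] at hrun
    have hgap := hadm.2 (j + m') hblack' (m - m' + 1) (by omega)
      (by rw [Nat.cast_add, ← add_assoc, hsplit, Nat.cast_one]; exact hblack)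
      (fun e he1 he2 => hwhite e he1 (by omega))
    rw [Nat.add_sub_cancel, ← even_iff_two_dvd] at hgap
    exact Nat.not_even_iff_odd.2 hrun hgap
  · intro hstep
    refine ⟨⟨j, hj⟩, fun i hi d hd hid hw => ?_⟩
    have hrun := hp.apply_add_eq_afterWhites ((hp.eq_black_iff i).2 hi) (m := d - 1)
      fun e he1 he2 => hw e he1 (by omega)
    have hlast : c (i + ((d - 1 : ℕ) : ZMod n) + 1) = true := by
      rwa [add_assoc, ← Nat.cast_add_one, Nat.sub_add_cancel hd]
    have := mt (hstep _) (not_not.2 hlast)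
    rw [hrun, afterWhites_eq_whiteOdd_iff, Nat.not_odd_iff_even] at this
    exact even_iff_two_dvd.1 this

theorem tracks_of_isCyclicWalk (hp : IsCyclicWalk Step p) :
    Tracks (fun i => decide (p i = black)) p :=
  fun i => (next_decide_eq_black_of_step (hp i)).symm

theorem admissible_of_isCyclicWalk [NeZero n] (hp : IsCyclicWalk Step p)
    {j : ZMod n} (hj : p j = black) : Admissible 2 n (fun i => decide (p i = black)) :=
  ((tracks_of_isCyclicWalk hp).admissible_iff (by simpa using hj)).2 hp

theorem card_admissible_eq_card_isCyclicWalk_black [NeZero n] :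
    Nat.card {c : ZMod n → Bool // Admissible 2 n c} =
      Nat.card {w : {p : ZMod n → Bead // IsCyclicWalk Step p} // ∃ i, w.1 i = black} := by
  refine (Nat.card_congr (Equiv.ofBijective
    (fun w => ⟨_, admissible_of_isCyclicWalk w.1.2 w.2.choose_spec⟩) ⟨?_, ?_⟩)).symm
  · rintro ⟨⟨p, hp⟩, j, hj⟩ ⟨⟨q, hq⟩, _⟩ h
    have hc : (fun i => decide (p i = black)) = fun i => decide (q i = black) :=
      congrArg Subtype.val h
    have hq' := tracks_of_isCyclicWalk hq
    rw [← hc] at hq'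
    exact Subtype.ext <| Subtype.ext <|
      (tracks_of_isCyclicWalk hp).unique hq' (j := j) (by simpa using hj)
  · rintro ⟨c, hc⟩
    obtain ⟨j, hj⟩ := hc.1
    obtain ⟨p, hp⟩ := exists_tracks hj
    refine ⟨⟨⟨p, (hp.admissible_iff hj).1 hc⟩, j, (hp.eq_black_iff j).2 hj⟩, ?_⟩
    ext i
    simp [hp.eq_black_iff]

theorem transferMatrix_step_pow_three :
    transferMatrix Step ^ 3 = transferMatrix Step ^ 2 + transferMatrix Step := by
  decide

theorem transferMatrix_white_sq :
    transferMatrix (fun x y : {b : Bead // b ≠ black} => Step x y) ^ 2 = 1 := by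
  decide

theorem trace_transferMatrix_step_pow_add_three (k : ℕ) :
    (transferMatrix Step ^ (k + 3)).trace =
      (transferMatrix Step ^ (k + 2)).trace + (transferMatrix Step ^ (k + 1)).trace := by
  rw [pow_add, transferMatrix_step_pow_three, mul_add, ← pow_add, ← pow_succ, Matrix.trace_add]

theorem trace_transferMatrix_white_pow (n : ℕ) :
    ((transferMatrix (fun x y : {b : Bead // b ≠ black} => Step x y) ^ n).trace : ℤ) =
      1 + (-1) ^ n := by
  obtain ⟨k, rfl | rfl⟩ := Nat.even_or_odd' n
  · rw [pow_mul, transferMatrix_white_sq, one_pow, pow_mul]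
    norm_num
    decide
  · rw [pow_succ, pow_mul, transferMatrix_white_sq, one_pow, one_mul, pow_succ, pow_mul]
    norm_num
    decide

theorem card_admissible_add_trace [NeZero n] :
    Nat.card {c : ZMod n → Bool // Admissible 2 n c} +
        (transferMatrix (fun x y : {b : Bead // b ≠ black} => Step x y) ^ n).trace =
      (transferMatrix Step ^ n).trace := by
  rw [← card_isCyclicWalk_eq_trace _ (NeZero.ne n),
    ← card_isCyclicWalk_eq_trace _ (NeZero.ne n),
    ← Nat.card_congr (cyclicWalkSubtypeEquiv Step (· ≠ black)),
    card_admissible_eq_card_isCyclicWalk_black, ← Nat.card_sum]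
  exact Nat.card_congr ((Equiv.sumCongr (Equiv.refl _)
    (Equiv.subtypeEquivRight fun w => not_exists)).symm.trans (Equiv.sumCompl _))

theorem card_admissible_eq_trace [NeZero n] :
    (Nat.card {c : ZMod n → Bool // Admissible 2 n c} : ℤ) =
      (transferMatrix Step ^ n).trace - 1 - (-1) ^ n := by
  have h := congrArg (Nat.cast : ℕ → ℤ) (card_admissible_add_trace (n := n))
  push_cast at h
  rw [trace_transferMatrix_white_pow] at h
  linarith

end Bead

theorem stmt3_general (a : ℕ → ℤ) (h1 : a 1 = 1) (h2 : a 2 = 1)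
    (hrec : ∀ n : ℕ, 3 ≤ n → a n = a (n - 1) + a (n - 2) + 1 - (-1) ^ n) :
    ∀ n : ℕ, 1 ≤ n →
      a n = Nat.card {c : ZMod n → Bool // Admissible 2 n c} := by
  let t : ℕ → ℤ := fun m => (transferMatrix Bead.Step ^ m).trace - 1 - (-1) ^ m
  have key : ∀ k, a (k + 1) = t (k + 1) ∧ a (k + 2) = t (k + 2) := by
    intro k
    induction k with
    | zero =>
      have ht1 : (transferMatrix Bead.Step ^ 1).trace = 1 := by decide
      have ht2 : (transferMatrix Bead.Step ^ 2).trace = 3 := by decide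
      simp only [t, ht1, ht2, h1, h2]
      norm_num
    | succ k ih =>
      refine ⟨ih.2, ?_⟩
      rw [hrec (k + 3) (by omega), show k + 3 - 1 = k + 2 from rfl,
        show k + 3 - 2 = k + 1 from rfl, ih.1, ih.2]
      simp only [t, Bead.trace_transferMatrix_step_pow_add_three]
      push_cast
      ring
  intro n hn
  obtain ⟨k, rfl⟩ := Nat.exists_eq_add_one.2 hn
  rw [(key k).1, Bead.card_admissible_eq_trace]

/-- The associated Mersenne numbers count the `2`-admissible colorings of a
cycle of length `n`. -/
theorem stmt3 (a : ℕ → ℤ) (h0 : a 0 = 0) (h1 : a 1 = 1) (h2 : a 2 = 1)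
    (hrec : ∀ n : ℕ, 3 ≤ n → a n = a (n - 1) + a (n - 2) + 1 - (-1) ^ n) :
    ∀ n : ℕ, 1 ≤ n →
      a n = Nat.card {c : ZMod n → Bool // Admissible 2 n c} :=
  stmt3_general a h1 h2 hrec
end

section
/- For n ≥ q+1, there is a bijection between the set of q-admissible colorings of a cycle of length n−q and the set of q-admissible colorings of a cycle of length n whose beads at positions 1,2,...,q are all white. -/
def IsAdmissibleSeq (q : ℕ) (f : ℤ → Bool) : Prop :=
  (∃ k, f k = true) ∧
  ∀ a b, a < b → f a = true → f b = true → (∀ x, a < x → x < b → f x = false) →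
    (q : ℤ) ∣ b - a - 1

theorem admissible_iff_isAdmissibleSeq {q N : ℕ} {c : ZMod N → Bool} :
    Admissible q N c ↔ IsAdmissibleSeq q (fun k : ℤ => c k) := by
  have hdvd (a : ℤ) (d : ℕ) (hd : 0 < d) : (q : ℤ) ∣ a + d - a - 1 ↔ q ∣ d - 1 := by
    rw [show a + d - a - 1 = ((d - 1 : ℕ) : ℤ) by omega, Int.natCast_dvd_natCast]
  constructor
  · rintro ⟨⟨i, hi⟩, hgap⟩
    obtain ⟨a, rfl⟩ := ZMod.intCast_surjective i
    refine ⟨⟨a, hi⟩, fun a b hab ha hb hwhite => ?_⟩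
    obtain ⟨d, rfl⟩ : ∃ d : ℕ, b = a + d := ⟨(b - a).toNat, by omega⟩
    refine (hdvd a d (by omega)).2 (hgap a ha d (by omega) (by simpa using hb) fun e he hed => ?_)
    simpa using hwhite (a + e) (by omega) (by omega)
  · rintro ⟨⟨a, ha⟩, hgap⟩
    refine ⟨⟨a, ha⟩, fun i hi d hd hb hwhite => ?_⟩
    obtain ⟨a, rfl⟩ := ZMod.intCast_surjective i
    refine (hdvd a d hd).1 (hgap a (a + d) (by omega) hi (by simpa using hb) fun x hax hxb => ?_)
    obtain ⟨e, rfl⟩ : ∃ e : ℕ, x = a + e := ⟨(x - a).toNat, by omega⟩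
    simpa using hwhite e (by omega) (by omega)

theorem isAdmissibleSeq_comp_iff {q : ℕ} {g : ℤ → Bool} {σ : ℤ → ℤ} (hσ : StrictMono σ)
    (hdvd : ∀ k, (q : ℤ) ∣ σ k - k) (hrange : ∀ y, g y = true → ∃ k, σ k = y) :
    IsAdmissibleSeq q (g ∘ σ) ↔ IsAdmissibleSeq q g := by
  have hgap (a b : ℤ) : (q : ℤ) ∣ σ b - σ a - 1 ↔ (q : ℤ) ∣ b - a - 1 := by
    rw [show σ b - σ a - 1 = (b - a - 1) + ((σ b - b) - (σ a - a)) by ring,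
      dvd_add_left (dvd_sub (hdvd b) (hdvd a))]
  constructor
  · rintro ⟨⟨k, hk⟩, hσgap⟩
    refine ⟨⟨σ k, hk⟩, fun a b hab ha hb hwhite => ?_⟩
    obtain ⟨a, rfl⟩ := hrange a ha
    obtain ⟨b, rfl⟩ := hrange b hb
    refine (hgap a b).2 (hσgap a b (hσ.lt_iff_lt.1 hab) ha hb fun x hax hxb => ?_)
    exact hwhite (σ x) (hσ hax) (hσ hxb)
  · rintro ⟨⟨y, hy⟩, hggap⟩
    obtain ⟨k, rfl⟩ := hrange y hy
    refine ⟨⟨k, hy⟩, fun a b hab ha hb hwhite => ?_⟩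
    refine (hgap a b).1 (hggap (σ a) (σ b) (hσ hab) ha hb fun x hax hxb => ?_)
    by_contra hx
    obtain ⟨y, rfl⟩ := hrange x (Bool.not_eq_false _ ▸ hx)
    exact hx (hwhite y (hσ.lt_iff_lt.1 hax) (hσ.lt_iff_lt.1 hxb))

/-- Where bead `k` of the lifted `m`-cycle lands when `q` beads are inserted behind every
multiple of `m`: at `k + q ⌈k / m⌉`, the ceiling being `(k + m - 1) / m`. -/
def spread (m q : ℕ) (k : ℤ) : ℤ := k + q * ((k + m - 1) / m)

section spread

variable {m q : ℕ}

theorem spread_strictMono (hm : 0 < m) : StrictMono (spread m q) := by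
  intro k l hkl
  have : (k + m - 1) / m ≤ (l + m - 1) / m := Int.ediv_le_ediv (by omega) (by omega)
  have := mul_le_mul_of_nonneg_left this (Int.natCast_nonneg q)
  simp only [spread]
  omega

theorem dvd_spread_sub (k : ℤ) : (q : ℤ) ∣ spread m q k - k :=
  ⟨(k + m - 1) / m, by simp [spread]⟩

theorem spread_add_mul (hm : 0 < m) (k t : ℤ) :
    spread m q (k + t * m) = spread m q k + t * (m + q) := by
  have : (k + t * m + m - 1) / m = (k + m - 1) / m + t := by
    rw [← Int.add_mul_ediv_right _ _ (by omega : (m : ℤ) ≠ 0)]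
    ring_nf
  simp only [spread, this]
  ring

theorem spread_zero (hm : 0 < m) : spread m q 0 = 0 := by
  have : ((m : ℤ) - 1) / m = 0 := Int.ediv_eq_zero_of_lt (by omega) (by omega)
  simp [spread, this]

theorem spread_of_pos_of_lt {r : ℤ} (h0 : 0 < r) (hm : r < m) : spread m q r = r + q := by
  have : (r + m - 1) / m = 1 := by
    rw [show r + m - 1 = (r - 1) + 1 * m by ring, Int.add_mul_ediv_right _ _ (by omega),
      Int.ediv_eq_zero_of_lt (by omega : 0 ≤ r - 1) (by omega), zero_add]
  simp [spread, this]

theorem exists_spread_eq (hm : 0 < m) {y : ℤ} (hy : y % (m + q) = 0 ∨ q < y % (m + q)) :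
    ∃ k, spread m q k = y := by
  have hdecomp := Int.emod_add_ediv_mul y (m + q)
  have hlt := Int.emod_lt_of_pos y (by omega : (0 : ℤ) < m + q)
  rcases hy with hy | hy
  · refine ⟨y / (m + q) * m, ?_⟩
    rw [← zero_add (_ * _), spread_add_mul hm, spread_zero hm]
    omega
  · refine ⟨(y % (m + q) - q) + y / (m + q) * m, ?_⟩
    rw [spread_add_mul hm, spread_of_pos_of_lt (by omega) (by omega)]
    omega

end spread

def insertWhites (q m : ℕ) (c : ZMod m → Bool) (j : ZMod (m + q)) : Bool :=
  if j.val = 0 then c 0 else if j.val ≤ q then false else c (j.val - q : ℕ)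

def removeWhites (q m : ℕ) (c : ZMod (m + q) → Bool) (i : ZMod m) : Bool :=
  if i.val = 0 then c 0 else c (i.val + q : ℕ)

section Colorings

variable {q m : ℕ}

theorem insertWhites_natCast_eq_false [NeZero m] (c : ZMod m → Bool) (j : ℕ) (h1 : 1 ≤ j)
    (h2 : j ≤ q) : insertWhites q m c j = false := by
  have : 0 < m := Nat.pos_of_neZero m
  simp [insertWhites, ZMod.val_cast_of_lt (by omega : j < m + q), h2]
  omega

theorem removeWhites_insertWhites [NeZero m] (c : ZMod m → Bool) :
    removeWhites q m (insertWhites q m c) = c := by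
  funext i
  have hi := ZMod.val_lt i
  by_cases h0 : i.val = 0
  · simp [removeWhites, insertWhites, (ZMod.val_eq_zero i).1 h0]
  · rw [removeWhites, if_neg h0, insertWhites, ZMod.val_cast_of_lt (by omega : i.val + q < m + q),
      if_neg (by omega), if_neg (by omega), Nat.add_sub_cancel, ZMod.natCast_zmod_val]

theorem insertWhites_removeWhites [NeZero m] {c : ZMod (m + q) → Bool}
    (hc : ∀ j : ℕ, 1 ≤ j → j ≤ q → c j = false) : insertWhites q m (removeWhites q m c) = c := by
  funext j
  have hj := ZMod.val_lt j
  by_cases h0 : j.val = 0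
  · simp [removeWhites, insertWhites, (ZMod.val_eq_zero j).1 h0]
  by_cases hq : j.val ≤ q
  · simp [insertWhites, h0, hq, ← hc j.val (by omega) hq]
  · simp [removeWhites, insertWhites, h0, hq, ZMod.val_cast_of_lt (by omega : j.val - q < m),
      show j.val - q ≠ 0 by omega, Nat.sub_add_cancel (by omega : q ≤ j.val)]

theorem removeWhites_intCast [NeZero m] (c : ZMod (m + q) → Bool) (k : ℤ) :
    removeWhites q m c k = c (spread m q k) := by
  have hm : 0 < m := Nat.pos_of_neZero m
  have hval : ((k : ZMod m).val : ℤ) = k % m := ZMod.val_intCast k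
  have hk : spread m q k = spread m q (k % m) + k / m * (m + q) := by
    rw [← spread_add_mul hm, Int.emod_add_ediv_mul]
  have hlt := Int.emod_lt_of_pos k (by omega : (0 : ℤ) < m)
  have hperiod : ((m + q : ℤ) : ZMod (m + q)) = 0 := by exact_mod_cast ZMod.natCast_self (m + q)
  rw [hk, Int.cast_add, Int.cast_mul, hperiod, mul_zero, add_zero, ← hval, removeWhites]
  split_ifs with h0
  · rw [h0, Nat.cast_zero, spread_zero hm, Int.cast_zero]
  · rw [spread_of_pos_of_lt (by omega) (by omega)]
    push_cast
    rfl

theorem admissible_iff_removeWhites [NeZero m] {c : ZMod (m + q) → Bool}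
    (hc : ∀ j : ℕ, 1 ≤ j → j ≤ q → c j = false) :
    Admissible q m (removeWhites q m c) ↔ Admissible q (m + q) c := by
  have hm : 0 < m := Nat.pos_of_neZero m
  have hrange (y : ℤ) (hy : c y = true) : ∃ k, spread m q k = y := by
    refine exists_spread_eq hm ?_
    by_contra! hblock
    have hnn := Int.emod_nonneg y (by omega : (m : ℤ) + q ≠ 0)
    have hmod : ((y % (m + q) : ℤ) : ZMod (m + q)) = y := by
      exact_mod_cast ZMod.intCast_mod y (m + q)
    have := hc (y % (m + q)).toNat (by omega) (by omega)
    rw [← Int.cast_natCast, Int.toNat_of_nonneg hnn, hmod] at this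
    simp [this] at hy
  rw [admissible_iff_isAdmissibleSeq, admissible_iff_isAdmissibleSeq,
    ← isAdmissibleSeq_comp_iff (spread_strictMono hm) dvd_spread_sub hrange]
  simp only [removeWhites_intCast]
  rfl

end Colorings

def insertWhitesAdmissibleEquiv (q m : ℕ) [NeZero m] :
    {c : ZMod m → Bool // Admissible q m c} ≃
      {c : ZMod (m + q) → Bool // Admissible q (m + q) c ∧
        ∀ j : ℕ, 1 ≤ j → j ≤ q → c (j : ZMod (m + q)) = false} where
  toFun c := ⟨insertWhites q m c.1,
    (admissible_iff_removeWhites (insertWhites_natCast_eq_false c.1)).1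
      ((removeWhites_insertWhites c.1).symm ▸ c.2),
    insertWhites_natCast_eq_false c.1⟩
  invFun c := ⟨removeWhites q m c.1, (admissible_iff_removeWhites c.2.2).2 c.2.1⟩
  left_inv c := Subtype.ext (removeWhites_insertWhites c.1)
  right_inv c := Subtype.ext (insertWhites_removeWhites c.2.2)

theorem stmt11_general (q n : ℕ) (hn : q + 1 ≤ n) :
    Nonempty
      ({c : ZMod (n - q) → Bool // Admissible q (n - q) c} ≃
        {c : ZMod n → Bool // Admissible q n c ∧
          ∀ j : ℕ, 1 ≤ j → j ≤ q → c (j : ZMod n) = false}) := by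
  obtain ⟨m, rfl⟩ : ∃ m, n = m + q := ⟨n - q, by omega⟩
  have : NeZero m := ⟨by omega⟩
  rw [Nat.add_sub_cancel]
  exact ⟨insertWhitesAdmissibleEquiv q m⟩

/-- Removing/inserting `q` consecutive white beads at positions `1,…,q` gives
a bijection between `q`-admissible colorings of length `n - q` and those of
length `n` that are white at positions `1,…,q`. -/
theorem stmt11 (q n : ℕ) (hq : 1 ≤ q) (hn : q + 1 ≤ n) :
    Nonempty
      ({c : ZMod (n - q) → Bool // Admissible q (n - q) c} ≃
        {c : ZMod n → Bool // Admissible q n c ∧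
          ∀ j : ℕ, 1 ≤ j → j ≤ q → c (j : ZMod n) = false}) :=
  stmt11_general q n hn
end

section
/- A sequence (t_1,...,t_n) of nonnegative integers with t_1 + ... + t_n = n is a valid one-ball siteswap (i.e., the residues i + t_i mod n for i = 1,...,n are pairwise distinct — equivalently, a permutation of Z/nZ) if and only if its associated necklace coloring (position i black iff t_i > 0, with t_i equal to the cyclic distance to the next black position) is well-defined; consequently, the number of valid one-ball siteswap sequences of period n is 2^n − 1. -/
/-!
Read a throw of height `t i` at `i` as the arc `i + 1, …, i + t i` of the cycle `ZMod n`.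
Measured from a fixed point `k`, the throw raises the potential `(· - k).val` by `t i` minus `n`
times the number of passes of its arc over `k`. When `i ↦ i + t i` is a permutation these
increments sum to zero, so `∑ t i = n` means that every point is covered by exactly one arc,
which says that each nonzero throw lands on the next nonzero position with only zeros in
between. Conversely such a sequence is injective on `ZMod n` and is the gap sequence of its
support, and counting its arcs over a point of the support gives `∑ t i = n`; so the valid
sequences correspond to the nonempty subsets of `ZMod n`.
-/

open Finset Function

lemma ZMod.natCast_ne_zero_of_lt {n m : ℕ} (h0 : 0 < m) (hm : m < n) : (m : ZMod n) ≠ 0 := by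
  intro h
  have := congrArg ZMod.val h
  rw [ZMod.val_natCast_of_lt hm, ZMod.val_zero] at this
  omega

namespace ZMod

variable {n : ℕ} [NeZero n]

lemma val_add_one_add_mul (y : ZMod n) :
    y.val + 1 = (y + 1).val + n * if y + 1 = 0 then 1 else 0 := by
  have hval : (y + 1).val = (y.val + 1) % n := by
    rw [val_add, val_one_eq_one_mod, Nat.add_mod_mod]
  simp only [← val_eq_zero, hval]
  have hle : y.val + 1 ≤ n := y.val_lt
  rcases hle.lt_or_eq with h | h
  · simp [Nat.mod_eq_of_lt h]
  · simp [h]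

lemma val_sub_add_eq (x k : ZMod n) (T : ℕ) :
    (x - k).val + T = (x + T - k).val + n * #{e ∈ Icc 1 T | x + ((e : ℕ) : ZMod n) = k} := by
  induction T with
  | zero => simp
  | succ T ih =>
    have hcast : x + ((T + 1 : ℕ) : ZMod n) - k = x + T - k + 1 := by push_cast; ring
    have hland : x + ((T + 1 : ℕ) : ZMod n) = k ↔ x + T - k + 1 = 0 := by
      rw [← sub_eq_zero, hcast]
    rw [← insert_Icc_right_eq_Icc_add_one (by omega), filter_insert, hcast,
      ← add_assoc, ih, add_right_comm, val_add_one_add_mul (x + (T : ZMod n) - k)]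
    simp only [hland]
    split_ifs
    · rw [card_insert_of_notMem (by simp)]; ring
    · ring

end ZMod

lemma Finset.natCard_nonempty {α : Type*} [Fintype α] :
    Nat.card {s : Finset α // s.Nonempty} = 2 ^ Fintype.card α - 1 := by
  classical
  rw [Nat.card_eq_fintype_card, Fintype.card_congr (Equiv.subtypeEquivRight
    fun s : Finset α => nonempty_iff_ne_empty), Fintype.card_subtype_compl,
    Fintype.card_finset, Fintype.card_subtype_eq]

namespace Siteswap

variable {n : ℕ}

def landing (t : ZMod n → ℕ) (i : ZMod n) : ZMod n := i + t i

def IsNecklace (t : ZMod n → ℕ) : Prop :=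
  ∀ i, 0 < t i → 0 < t (i + t i) ∧ ∀ e : ℕ, 0 < e → e < t i → t (i + e) = 0

def coverCount (t : ZMod n → ℕ) (i k : ZMod n) : ℕ :=
  #{e ∈ Icc 1 (t i) | i + ((e : ℕ) : ZMod n) = k}

variable {t : ZMod n → ℕ}

lemma IsNecklace.pos_landing_iff (ht : IsNecklace t) (i : ZMod n) :
    0 < t (landing t i) ↔ 0 < t i := by
  refine ⟨fun h => ?_, fun hi => (ht i hi).1⟩
  by_contra! hi
  simp [landing, Nat.le_zero.1 hi] at h

variable [NeZero n]

theorem sum_eq_mul_sum_coverCount (hb : Bijective (landing t)) (k : ZMod n) :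
    ∑ i, t i = n * ∑ i, coverCount t i k := by
  have hperm : ∑ i, (landing t i - k).val = ∑ i, (i - k).val :=
    Fintype.sum_bijective _ hb _ (fun i => (i - k).val) fun _ => rfl
  have hwind : ∑ i, ((i - k).val + t i) = ∑ i, ((landing t i - k).val + n * coverCount t i k) :=
    sum_congr rfl fun i _ => ZMod.val_sub_add_eq i k (t i)
  rw [sum_add_distrib, sum_add_distrib, ← mul_sum, hperm] at hwind
  omega

theorem isNecklace_of_bijective (hsum : ∑ i, t i = n) (hb : Bijective (landing t)) :
    IsNecklace t := by
  intro i hi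
  refine ⟨?_, fun e he0 het => ?_⟩
  · -- otherwise `i` and `i + t i` have the same landing site
    by_contra! h0
    have hfix : landing t i = i := hb.1 (by simp [landing, Nat.le_zero.1 h0])
    rw [landing] at hfix
    rw [hfix] at h0
    omega
  · by_contra hne
    have hcover : ∑ j, coverCount t j (i + e + 1) = 1 := by
      have := sum_eq_mul_sum_coverCount hb (i + e + 1)
      rw [hsum, eq_comm, mul_eq_left₀ (NeZero.ne n)] at this
      exact this
    have hle : t i ≤ n := hsum ▸ single_le_sum (fun _ _ => Nat.zero_le _) (mem_univ i)
    have hdist : i ≠ i + e := by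
      simpa [eq_comm] using ZMod.natCast_ne_zero_of_lt he0 (het.trans_le hle)
    -- both the throw from `i` and the one from `i + e` pass over `i + e + 1`
    have h1 : 0 < coverCount t i (i + e + 1) :=
      card_pos.2 ⟨e + 1, mem_filter.2 ⟨mem_Icc.2 ⟨by omega, het⟩, by push_cast; ring⟩⟩
    have h2 : 0 < coverCount t (i + e) (i + e + 1) :=
      card_pos.2 ⟨1, mem_filter.2
        ⟨mem_Icc.2 ⟨le_rfl, Nat.pos_of_ne_zero hne⟩, by push_cast; ring⟩⟩
    have hpair : coverCount t i (i + e + 1) + coverCount t (i + e) (i + e + 1) ≤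
        ∑ j, coverCount t j (i + e + 1) := by
      rw [← sum_pair (f := fun j => coverCount t j (i + e + 1)) hdist]
      exact sum_le_sum_of_subset (subset_univ _)
    omega

namespace IsNecklace

variable (ht : IsNecklace t)
include ht

lemma le_val_sub {i j : ZMod n} (hi : 0 < t i) (hj : 0 < t j) (hij : i ≠ j) :
    t i ≤ (j - i).val := by
  by_contra! h
  have hpos : 0 < (j - i).val := by
    rw [Nat.pos_iff_ne_zero, ne_eq, ZMod.val_eq_zero, sub_eq_zero]
    exact hij.symm
  have := (ht i hi).2 _ hpos h
  rw [ZMod.natCast_zmod_val, add_sub_cancel] at this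
  omega

theorem injective : Injective (landing t) := by
  intro i j hij
  by_contra hne
  rcases (t i).eq_zero_or_pos with hi | hi
  · have hj : ¬0 < t j := by rw [← ht.pos_landing_iff j, ← hij, ht.pos_landing_iff i]; omega
    simp only [landing, hi, Nat.eq_zero_of_not_pos hj, Nat.cast_zero, add_zero] at hij
    exact hne hij
  · have hj : 0 < t j := by rwa [← ht.pos_landing_iff j, ← hij, ht.pos_landing_iff i]
    have hsub := ht.le_val_sub hi hj hne
    have hsub' := ht.le_val_sub hj hi (Ne.symm hne)
    have : NeZero (j - i) := ⟨sub_ne_zero.2 (Ne.symm hne)⟩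
    have hval : (i - j).val = n - (j - i).val := by
      rw [← neg_sub, ZMod.val_neg_of_ne_zero]
    have hlt := (j - i).val_lt
    -- `i + t i = j + t j` makes `(j - i).val + t j - t i` divisible by `n`, yet it lies in `(0, n)`
    refine ZMod.natCast_ne_zero_of_lt (n := n) (m := (j - i).val + t j - t i)
      (by omega) (by omega) ?_
    rw [Nat.cast_sub (by omega), Nat.cast_add, ZMod.natCast_zmod_val, sub_eq_zero]
    unfold landing at hij
    linear_combination -hij

theorem bijective : Bijective (landing t) := Finite.injective_iff_bijective.1 ht.injective

-- A throw passing over a black bead lands on it, so the throws cover `j` at most once.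
theorem sum_eq {j : ZMod n} (hj : 0 < t j) : ∑ i, t i = n := by
  have hcover : ∀ i, coverCount t i j ≤ if landing t i = j then 1 else 0 := fun i => calc
    coverCount t i j ≤ #{e ∈ {t i} | i + ((e : ℕ) : ZMod n) = j} := by
      refine card_le_card fun e he => ?_
      obtain ⟨heI, rfl⟩ := mem_filter.1 he
      obtain ⟨he0, het⟩ := mem_Icc.1 heI
      refine mem_filter.2 ⟨mem_singleton.2 (het.eq_or_lt.resolve_right fun hlt => ?_), rfl⟩
      have := (ht i (by omega)).2 e he0 hlt
      omega
    _ = if landing t i = j then 1 else 0 := by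
      rw [filter_singleton, landing]
      split_ifs <;> simp
  have hle : ∑ i, coverCount t i j ≤ 1 := calc
    ∑ i, coverCount t i j ≤ ∑ i, if landing t i = j then 1 else 0 :=
        sum_le_sum fun i _ => hcover i
    _ = #{i | landing t i = j} := by rw [sum_boole]; rfl
    _ ≤ 1 := card_le_one.2 fun a ha b hb => ht.injective <| by
      rw [(mem_filter.1 ha).2, (mem_filter.1 hb).2]
  have hpos : 0 < ∑ i, t i := hj.trans_le (single_le_sum (fun _ _ => Nat.zero_le _) (mem_univ j))
  have := sum_eq_mul_sum_coverCount ht.bijective j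
  interval_cases h : ∑ i, coverCount t i j <;> omega

end IsNecklace

lemma exists_pos_add_mem {S : Finset (ZMod n)} {i : ZMod n} (hi : i ∈ S) :
    ∃ e : ℕ, 0 < e ∧ i + (e : ZMod n) ∈ S :=
  ⟨n, Nat.pos_of_neZero n, by simpa using hi⟩

def gapSeq (S : Finset (ZMod n)) (i : ZMod n) : ℕ :=
  if hi : i ∈ S then Nat.find (exists_pos_add_mem hi) else 0

lemma gapSeq_pos_iff {S : Finset (ZMod n)} {i : ZMod n} : 0 < gapSeq S i ↔ i ∈ S := by
  unfold gapSeq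
  split_ifs with hi
  · exact iff_of_true (Nat.find_spec (exists_pos_add_mem hi)).1 hi
  · exact iff_of_false (lt_irrefl 0) hi

lemma isNecklace_gapSeq (S : Finset (ZMod n)) : IsNecklace (gapSeq S) := by
  intro i hi
  have hiS := gapSeq_pos_iff.1 hi
  have hgap : gapSeq S i = Nat.find (exists_pos_add_mem hiS) := dif_pos hiS
  refine ⟨gapSeq_pos_iff.2 (hgap ▸ (Nat.find_spec (exists_pos_add_mem hiS)).2),
    fun e he0 he => ?_⟩
  rw [hgap] at he
  exact dif_neg fun h => Nat.find_min (exists_pos_add_mem hiS) he ⟨he0, h⟩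

lemma IsNecklace.gapSeq_support (ht : IsNecklace t) : gapSeq {i | 0 < t i} = t := by
  funext i
  unfold gapSeq
  split_ifs with hi
  · rw [mem_filter] at hi
    rw [Nat.find_eq_iff]
    refine ⟨⟨hi.2, mem_filter.2 ⟨mem_univ _, (ht i hi.2).1⟩⟩,
      fun e he ⟨he0, heS⟩ => ?_⟩
    have := (ht i hi.2).2 e he0 he
    have := (mem_filter.1 heS).2
    omega
  · simp only [mem_filter, mem_univ, true_and, not_lt, Nat.le_zero] at hi
    exact hi.symm

def necklaceEquiv : {t : ZMod n → ℕ // ∑ i, t i = n ∧ IsNecklace t} ≃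
    {S : Finset (ZMod n) // S.Nonempty} where
  toFun t := ⟨({i | 0 < t.1 i} : Finset (ZMod n)), by
    obtain ⟨i, -, hi⟩ := exists_ne_zero_of_sum_ne_zero (t.2.1.trans_ne (NeZero.ne n))
    exact ⟨i, mem_filter.2 ⟨mem_univ i, Nat.pos_of_ne_zero hi⟩⟩⟩
  invFun S := ⟨gapSeq S.1, by
    obtain ⟨i, hi⟩ := S.2
    exact (isNecklace_gapSeq S.1).sum_eq (gapSeq_pos_iff.2 hi), isNecklace_gapSeq S.1⟩
  left_inv t := Subtype.ext t.2.2.gapSeq_support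
  right_inv S := Subtype.ext <| by ext; simp [gapSeq_pos_iff]

end Siteswap

/-- A sequence summing to `n` is a valid one-ball siteswap iff every nonzero
throw lands exactly on the next black position (with only empty hands in
between); consequently there are `2 ^ n - 1` one-ball siteswaps of period
`n`. -/
theorem stmt14 (n : ℕ) [NeZero n] :
    (∀ t : ZMod n → ℕ, (∑ i, t i) = n →
      (Function.Bijective (fun i : ZMod n => i + (t i : ZMod n)) ↔
        ∀ i : ZMod n, 0 < t i →
          0 < t (i + (t i : ZMod n)) ∧
            ∀ e : ℕ, 0 < e → e < t i → t (i + (e : ZMod n)) = 0)) ∧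
    Nat.card {t : ZMod n → ℕ // (∑ i, t i) = n ∧
        Function.Bijective (fun i : ZMod n => i + (t i : ZMod n))} =
      2 ^ n - 1 := by
  have hiff : ∀ t : ZMod n → ℕ, ∑ i, t i = n →
      (Bijective (Siteswap.landing t) ↔ Siteswap.IsNecklace t) :=
    fun _ ht => ⟨Siteswap.isNecklace_of_bijective ht, Siteswap.IsNecklace.bijective⟩
  refine ⟨hiff, ?_⟩
  calc Nat.card {t : ZMod n → ℕ // ∑ i, t i = n ∧ Bijective (Siteswap.landing t)}
      = Nat.card {t : ZMod n → ℕ // ∑ i, t i = n ∧ Siteswap.IsNecklace t} :=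
        Nat.card_congr (Equiv.subtypeEquivRight fun t => and_congr_right (hiff t))
    _ = Nat.card {S : Finset (ZMod n) // S.Nonempty} := Nat.card_congr Siteswap.necklaceEquiv
    _ = 2 ^ n - 1 := by rw [Finset.natCard_nonempty, ZMod.card]
end

section
/- For n ≥ 1, the number of 2-admissible colorings of a cycle of length n (at least one black bead; an even number of white beads between any two cyclically consecutive black beads) equals the number of tilings of a cycle of length n by curved squares (covering one position) and curved dominoes (covering two adjacent positions) when n is odd, and equals that number minus 2 when n is even; in particular for odd n this count equals the Lucas number L(n). -/
/-!
Colour black the beads of the cycle that a tiling covers by squares. For a tiling with at least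
one square this coloring is `2`-admissible, and the tiling is recovered from it: the dominoes start
exactly at the white beads lying at odd distance after the preceding black bead. Tilings without
squares alternate, so there are none for odd `n` and two for even `n`.

Recording a tiling by its set of domino starts and splitting on whether a domino starts at `0`, the
tilings of the cycle are counted by nonconsecutive subsets of two intervals, which are Fibonacci
numbers: there are `F (n + 1) + F (n - 1) = L n` of them.
-/

open Finset

section Nonconsecutive

variable {α : Type*} [Add α] [One α]

def Nonconsecutive (D : Finset α) : Prop := ∀ d ∈ D, d + 1 ∉ D

lemma Nonconsecutive.mono {S T : Finset α} (hS : Nonconsecutive S) (hTS : T ⊆ S) :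
    Nonconsecutive T :=
  fun d hd hd1 => hS d (hTS hd) (hTS hd1)

variable [DecidableEq α]

instance : DecidablePred (Nonconsecutive (α := α)) :=
  fun D => inferInstanceAs (Decidable (∀ d ∈ D, d + 1 ∉ D))

def nonconsecutiveSubsets (s : Finset α) : Finset (Finset α) :=
  s.powerset.filter Nonconsecutive

@[simp]
lemma mem_nonconsecutiveSubsets {s S : Finset α} :
    S ∈ nonconsecutiveSubsets s ↔ S ⊆ s ∧ Nonconsecutive S := by
  simp [nonconsecutiveSubsets]

lemma filter_notMem_nonconsecutiveSubsets (s : Finset α) (t : α) :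
    (nonconsecutiveSubsets s).filter (t ∉ ·) = nonconsecutiveSubsets (s.erase t) := by
  ext S
  simp only [mem_filter, mem_nonconsecutiveSubsets, subset_erase]
  tauto

@[simp]
lemma nonconsecutiveSubsets_empty : nonconsecutiveSubsets (∅ : Finset α) = {∅} := by
  ext S
  simp only [mem_nonconsecutiveSubsets, subset_empty, mem_singleton, and_iff_left_iff_imp]
  rintro rfl
  simp [Nonconsecutive]

end Nonconsecutive

lemma card_filter_mem_nonconsecutiveSubsets {s : Finset ℕ} {t : ℕ} (ht : t ∈ s) :
    #((nonconsecutiveSubsets s).filter (t ∈ ·)) =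
      #(nonconsecutiveSubsets (s \ {t - 1, t, t + 1})) := by
  refine card_nbij' (·.erase t) (insert t) ?_ ?_ ?_ ?_
  · intro S hS
    simp only [mem_coe, mem_filter, mem_nonconsecutiveSubsets] at hS ⊢
    obtain ⟨⟨hSs, hS⟩, htS⟩ := hS
    refine ⟨fun x hx => ?_, hS.mono (erase_subset t S)⟩
    obtain ⟨hxt, hxS⟩ := mem_erase.mp hx
    have hx1 : x + 1 ≠ t := fun h => hS x hxS (h ▸ htS)
    have ht1 : x ≠ t + 1 := fun h => hS t htS (h ▸ hxS)
    simp only [mem_sdiff, mem_insert, mem_singleton]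
    exact ⟨hSs hxS, by omega⟩
  · intro S hS
    simp only [mem_coe, mem_filter, mem_nonconsecutiveSubsets] at hS ⊢
    obtain ⟨hSs, hS⟩ := hS
    have hfar : ∀ x ∈ S, x ≠ t - 1 ∧ x ≠ t ∧ x ≠ t + 1 := fun x hx => by
      simpa using (mem_sdiff.mp (hSs hx)).2
    refine ⟨⟨insert_subset ht fun x hx => (mem_sdiff.mp (hSs hx)).1, ?_⟩,
      mem_insert_self t S⟩
    intro d hd hd1
    rw [mem_insert] at hd hd1
    rcases hd with rfl | hd <;> rcases hd1 with h | h
    · omega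
    · exact (hfar _ h).2.2 rfl
    · have := hfar d hd; omega
    · exact hS d hd h
  · intro S hS
    exact insert_erase (mem_filter.mp hS).2
  · intro S hS
    simp only [mem_coe, mem_nonconsecutiveSubsets] at hS
    exact erase_insert fun h => by simpa using (mem_sdiff.mp (hS.1 h)).2

lemma card_nonconsecutiveSubsets_eq_add {s : Finset ℕ} {t : ℕ} (ht : t ∈ s) :
    #(nonconsecutiveSubsets s) =
      #(nonconsecutiveSubsets (s.erase t)) +
        #(nonconsecutiveSubsets (s \ {t - 1, t, t + 1})) := by
  rw [← filter_notMem_nonconsecutiveSubsets, ← card_filter_mem_nonconsecutiveSubsets ht,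
    add_comm, card_filter_add_card_filter_not]

lemma card_nonconsecutiveSubsets_Ico (a : ℕ) :
    ∀ m, #(nonconsecutiveSubsets (Ico a (a + m))) = Nat.fib (m + 2)
  | 0 => by simp
  | 1 => by
    have hempty : Ico a (a + 1) \ {a - 1, a, a + 1} = ∅ := by ext x; simp; omega
    rw [card_nonconsecutiveSubsets_eq_add (t := a) (by simp), hempty]
    simp [Nat.fib_add_two]
  | m + 2 => by
    have herase : (Ico a (a + (m + 2))).erase (a + m + 1) = Ico a (a + (m + 1)) := by
      ext x; simp; omega
    have hsdiff :
        Ico a (a + (m + 2)) \ {a + m + 1 - 1, a + m + 1, a + m + 1 + 1} = Ico a (a + m) := by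
      ext x; simp; omega
    rw [card_nonconsecutiveSubsets_eq_add (t := a + m + 1) (by simp; omega), herase, hsdiff,
      card_nonconsecutiveSubsets_Ico a (m + 1), card_nonconsecutiveSubsets_Ico a m, add_comm]
    exact Nat.fib_add_two.symm

lemma card_filter_nonconsecutiveSubsets_range (m : ℕ) :
    #((nonconsecutiveSubsets (range (m + 1))).filter fun S => ¬(0 ∈ S ∧ m ∈ S)) =
      Nat.fib (m + 2) + Nat.fib m := by
  rw [← card_filter_add_card_filter_not (p := (0 ∉ ·)), filter_filter, filter_filter]
  congr 1
  · have hfilter : ((nonconsecutiveSubsets (range (m + 1))).filter fun S =>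
        ¬(0 ∈ S ∧ m ∈ S) ∧ 0 ∉ S) =
          (nonconsecutiveSubsets (range (m + 1))).filter (0 ∉ ·) :=
      filter_congr fun S _ => by tauto
    have hrange : (range (m + 1)).erase 0 = Ico 1 (1 + m) := by ext x; simp; omega
    rw [hfilter, filter_notMem_nonconsecutiveSubsets, hrange, card_nonconsecutiveSubsets_Ico]
  · have hfilter : ((nonconsecutiveSubsets (range (m + 1))).filter fun S =>
        ¬(0 ∈ S ∧ m ∈ S) ∧ ¬0 ∉ S) =
          ((nonconsecutiveSubsets (range (m + 1))).filter (m ∉ ·)).filter (0 ∈ ·) := by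
      rw [filter_filter]; exact filter_congr fun S _ => by tauto
    rw [hfilter, filter_notMem_nonconsecutiveSubsets, range_add_one,
      erase_insert notMem_range_self]
    rcases m with _ | k
    · simp
    rw [card_filter_mem_nonconsecutiveSubsets (by simp)]
    rcases k with _ | j
    · rw [show range 1 \ {0 - 1, 0, 0 + 1} = ∅ by decide]; rfl
    have hrange : range (j + 2) \ {0 - 1, 0, 0 + 1} = Ico 2 (2 + j) := by ext x; simp; omega
    rw [hrange, card_nonconsecutiveSubsets_Ico]

section Cycle

variable {n : ℕ}

lemma natCast_add_one_eq_natCast_iff {i j : ℕ} (hi : i < n) (hj : j < n) :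
    (i : ZMod n) + 1 = j ↔ j = i + 1 ∨ i + 1 = n ∧ j = 0 := by
  rw [← Nat.cast_add_one, ZMod.natCast_eq_natCast_iff', Nat.mod_eq_of_lt hj]
  rcases (Nat.succ_le_of_lt hi).lt_or_eq with h | h
  · rw [Nat.mod_eq_of_lt h]; omega
  · rw [← h, Nat.mod_self]; omega

lemma nonconsecutive_image_natCast_iff {S : Finset ℕ} (hS : S ⊆ range n) :
    Nonconsecutive (S.image (Nat.cast : ℕ → ZMod n)) ↔
      Nonconsecutive S ∧ ¬(0 ∈ S ∧ n - 1 ∈ S) := by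
  have hlt : ∀ i ∈ S, i < n := fun i hi => mem_range.mp (hS hi)
  simp only [Nonconsecutive, forall_mem_image]
  simp only [mem_image, not_exists, not_and]
  constructor
  · intro h
    refine ⟨fun i hi hi1 => h hi (i + 1) hi1 (by push_cast; rfl), fun h0 hlast => ?_⟩
    refine h hlast 0 h0 ((natCast_add_one_eq_natCast_iff (hlt _ hlast) (hlt _ h0)).mpr ?_).symm
    have := hlt 0 h0
    omega
  · rintro ⟨h, hwrap⟩ i hi j hj hij
    obtain rfl | ⟨hin, rfl⟩ :=
      (natCast_add_one_eq_natCast_iff (hlt i hi) (hlt j hj)).mp hij.symm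
    · exact h i hi hj
    · exact hwrap hj (by rwa [← hin, Nat.add_sub_cancel])

lemma image_val_image_natCast {S : Finset ℕ} (hS : S ⊆ range n) :
    (S.image (Nat.cast : ℕ → ZMod n)).image ZMod.val = S := by
  rw [image_image]
  conv_rhs => rw [← image_id (s := S)]
  exact image_congr fun i hi => ZMod.val_cast_of_lt (mem_range.mp (hS hi))

variable [NeZero n]

lemma image_natCast_image_val (D : Finset (ZMod n)) : (D.image ZMod.val).image Nat.cast = D := by
  simp [image_image, Function.comp_def]

lemma image_val_subset_range (D : Finset (ZMod n)) : D.image ZMod.val ⊆ range n :=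
  fun _ hi => by
    obtain ⟨x, -, rfl⟩ := mem_image.mp hi
    exact mem_range.mpr (ZMod.val_lt x)

lemma card_nonconsecutive_zmod :
    #(univ.filter (Nonconsecutive (α := ZMod n))) =
      #((nonconsecutiveSubsets (range n)).filter fun S => ¬(0 ∈ S ∧ n - 1 ∈ S)) := by
  refine card_nbij' (·.image ZMod.val) (·.image Nat.cast) ?_ ?_ ?_ ?_
  · intro D hD
    simp only [mem_coe, mem_filter, mem_univ, true_and, mem_nonconsecutiveSubsets] at hD ⊢
    rw [and_assoc, ← nonconsecutive_image_natCast_iff (image_val_subset_range D),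
      image_natCast_image_val]
    exact ⟨image_val_subset_range D, hD⟩
  · intro S hS
    simp only [mem_coe, mem_filter, mem_univ, true_and, mem_nonconsecutiveSubsets] at hS ⊢
    exact (nonconsecutive_image_natCast_iff hS.1.1).mpr ⟨hS.1.2, hS.2⟩
  · intro D _
    exact image_natCast_image_val D
  · intro S hS
    simp only [mem_coe, mem_filter, mem_nonconsecutiveSubsets] at hS
    exact image_val_image_natCast hS.1.1

end Cycle

section Gap

variable {n : ℕ} {c : ZMod n → Bool}

-- `sInf ∅ = 0`: the gap is meaningful only when `c` has a black bead.
noncomputable def gap (c : ZMod n → Bool) (p : ZMod n) : ℕ :=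
  sInf {k | 0 < k ∧ c (p - k) = true}

lemma gap_spec [NeZero n] (hc : ∃ i, c i = true) (p : ZMod n) :
    0 < gap c p ∧ c (p - gap c p) = true := by
  obtain ⟨i, hi⟩ := hc
  refine Nat.sInf_mem (s := {k | 0 < k ∧ c (p - k) = true})
    ⟨(p - i).val + n, Nat.add_pos_right _ (NeZero.pos n), ?_⟩
  simpa [ZMod.natCast_self] using hi

lemma gap_min {p : ZMod n} {j : ℕ} (hj : 0 < j) (hjg : j < gap c p) : c (p - j) = false := by
  simpa [hj] using Nat.notMem_of_lt_sInf hjg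

lemma gap_eq {p : ZMod n} {d : ℕ} (hd : 0 < d) (hblack : c (p - d) = true)
    (hwhite : ∀ j, 0 < j → j < d → c (p - j) = false) : gap c p = d := by
  have hspec : 0 < gap c p ∧ c (p - gap c p) = true :=
    Nat.sInf_mem (s := {k | 0 < k ∧ c (p - k) = true}) ⟨d, hd, hblack⟩
  refine le_antisymm (Nat.sInf_le ⟨hd, hblack⟩) (not_lt.mp fun h => ?_)
  simp [hwhite _ hspec.1 h] at hspec

lemma gap_eq_one {p : ZMod n} (hp : c (p - 1) = true) : gap c p = 1 :=
  gap_eq one_pos (by simpa using hp) (by omega)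

lemma gap_eq_gap_sub_one_add_one [NeZero n] (hc : ∃ i, c i = true) {p : ZMod n}
    (hp : c (p - 1) = false) : gap c p = gap c (p - 1) + 1 := by
  obtain ⟨hpos, hblack⟩ := gap_spec hc (p - 1)
  refine gap_eq (Nat.succ_pos _) (by push_cast; rwa [sub_add_eq_sub_sub_swap]) fun j hj hjg => ?_
  rcases (Nat.succ_le_of_lt hj).eq_or_lt with rfl | hj1
  · simpa using hp
  · rw [show p - (j : ZMod n) = p - 1 - ((j - 1 : ℕ) : ZMod n) by
      push_cast [Nat.cast_sub hj1.le]; ring]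
    exact gap_min (by omega) (by omega)

end Gap

section Coloring

variable {n : ℕ} {c : ZMod n → Bool}

lemma admissible_two_iff [NeZero n] :
    Admissible 2 n c ↔ (∃ i, c i = true) ∧ ∀ p, c p = true → Odd (gap c p) := by
  refine ⟨fun h => ⟨h.1, fun p hp => ?_⟩, fun h => ⟨h.1, fun i _ d hd hid hwhite => ?_⟩⟩
  · obtain ⟨hpos, hblack⟩ := gap_spec h.1 p
    have hdvd := h.2 _ hblack (gap c p) hpos (by rwa [sub_add_cancel]) fun e he heg => by
      rw [show p - (gap c p : ZMod n) + e = p - ((gap c p - e : ℕ) : ZMod n) by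
        push_cast [Nat.cast_sub heg.le]; ring]
      exact gap_min (by omega) (by omega)
    rw [Nat.odd_iff]
    omega
  · have hgap : gap c (i + d) = d := gap_eq hd (by rwa [add_sub_cancel_right]) fun j hj hjd => by
      rw [show i + (d : ZMod n) - j = i + ((d - j : ℕ) : ZMod n) by
        push_cast [Nat.cast_sub hjd.le]; ring]
      exact hwhite _ (by omega) (by omega)
    obtain ⟨k, hk⟩ := hgap ▸ h.2 _ hid
    omega

-- A bead is black iff it is covered by a square, i.e. no domino starts at it or just before it.
def tilingColoring (D : Finset (ZMod n)) (i : ZMod n) : Bool := decide (i ∉ D ∧ i - 1 ∉ D)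

variable {D : Finset (ZMod n)} {p : ZMod n}

lemma tilingColoring_eq_true_iff : tilingColoring D p = true ↔ p ∉ D ∧ p - 1 ∉ D := by
  simp [tilingColoring]

lemma tilingColoring_eq_false_iff : tilingColoring D p = false ↔ p ∈ D ∨ p - 1 ∈ D := by
  simp [tilingColoring, or_iff_not_imp_left]

variable [NeZero n]

lemma mem_iff_odd_gap (hD : Nonconsecutive D) (hsq : ∃ i, tilingColoring D i = true)
    (hp : tilingColoring D p = false) : p ∈ D ↔ Odd (gap (tilingColoring D) p) := by
  -- the white beads after a black bead are alternately domino starts and domino ends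
  obtain ⟨g, hg⟩ : ∃ g, gap (tilingColoring D) p = g := ⟨_, rfl⟩
  induction g generalizing p with
  | zero => exact absurd hg (gap_spec hsq p).1.ne'
  | succ g ih =>
    cases hprev : tilingColoring D (p - 1)
    · have hstep := gap_eq_gap_sub_one_add_one hsq hprev
      have hiff : p ∈ D ↔ p - 1 ∉ D :=
        ⟨fun hpD hp1 => hD _ hp1 (by rwa [sub_add_cancel]),
          (tilingColoring_eq_false_iff.mp hp).resolve_right⟩
      rw [hiff, ih hprev (by omega), hstep, Nat.odd_add_one]
    · have hpD : p ∈ D := (tilingColoring_eq_false_iff.mp hp).resolve_right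
        (tilingColoring_eq_true_iff.mp hprev).1
      simp [hpD, gap_eq_one hprev]

noncomputable def dominoStarts (c : ZMod n → Bool) : Finset (ZMod n) :=
  univ.filter fun p => c p = false ∧ Odd (gap c p)

@[simp]
lemma mem_dominoStarts : p ∈ dominoStarts c ↔ c p = false ∧ Odd (gap c p) := by
  simp [dominoStarts]

lemma nonconsecutive_dominoStarts (hc : ∃ i, c i = true) :
    Nonconsecutive (dominoStarts c) := by
  intro p hp hp1
  rw [mem_dominoStarts] at hp hp1
  rw [gap_eq_gap_sub_one_add_one hc (by rw [add_sub_cancel_right]; exact hp.1),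
    add_sub_cancel_right, Nat.odd_add_one] at hp1
  exact hp1.2 hp.2

lemma dominoStarts_tilingColoring (hD : Nonconsecutive D)
    (hsq : ∃ i, tilingColoring D i = true) : dominoStarts (tilingColoring D) = D := by
  ext p
  cases hp : tilingColoring D p
  · simp [hp, mem_iff_odd_gap hD hsq hp]
  · simp [hp, (tilingColoring_eq_true_iff.mp hp).1]

lemma odd_gap_tilingColoring (hD : Nonconsecutive D)
    (hsq : ∃ i, tilingColoring D i = true) (hp : tilingColoring D p = true) :
    Odd (gap (tilingColoring D) p) := by
  cases hprev : tilingColoring D (p - 1)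
  · rw [gap_eq_gap_sub_one_add_one hsq hprev, Nat.odd_add_one, ← mem_iff_odd_gap hD hsq hprev]
    exact (tilingColoring_eq_true_iff.mp hp).2
  · rw [gap_eq_one hprev]
    exact odd_one

lemma tilingColoring_dominoStarts (hc : ∃ i, c i = true)
    (hodd : ∀ p, c p = true → Odd (gap c p)) : tilingColoring (dominoStarts c) = c := by
  funext p
  cases hp : c p
  · rw [tilingColoring_eq_false_iff, mem_dominoStarts, mem_dominoStarts]
    by_cases hg : Odd (gap c p)
    · exact Or.inl ⟨hp, hg⟩
    · cases hprev : c (p - 1)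
      · rw [gap_eq_gap_sub_one_add_one hc hprev, Nat.odd_add_one, not_not] at hg
        exact Or.inr ⟨rfl, hg⟩
      · exact absurd (gap_eq_one hprev ▸ odd_one) hg
  · rw [tilingColoring_eq_true_iff, mem_dominoStarts, mem_dominoStarts]
    refine ⟨fun h => by simp [hp] at h, fun ⟨hprev, hg⟩ => ?_⟩
    have := hodd p hp
    rw [gap_eq_gap_sub_one_add_one hc hprev, Nat.odd_add_one] at this
    exact this hg

noncomputable def tilingEquivAdmissible :
    {D : Finset (ZMod n) // Nonconsecutive D ∧ ∃ i, tilingColoring D i = true} ≃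
      {c : ZMod n → Bool // Admissible 2 n c} where
  toFun D := ⟨tilingColoring D.1, admissible_two_iff.mpr
    ⟨D.2.2, fun _ => odd_gap_tilingColoring D.2.1 D.2.2⟩⟩
  invFun c := ⟨dominoStarts c.1, nonconsecutive_dominoStarts (admissible_two_iff.mp c.2).1, by
    rw [tilingColoring_dominoStarts (admissible_two_iff.mp c.2).1 (admissible_two_iff.mp c.2).2]
    exact c.2.1⟩
  left_inv D := Subtype.ext (dominoStarts_tilingColoring D.2.1 D.2.2)
  right_inv c := Subtype.ext (tilingColoring_dominoStarts (admissible_two_iff.mp c.2).1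
    (admissible_two_iff.mp c.2).2)

end Coloring

section Alternating

variable {n : ℕ} {D : Finset (ZMod n)}

def IsAlternating (D : Finset (ZMod n)) : Prop := ∀ i, i + 1 ∈ D ↔ i ∉ D

lemma nonconsecutive_and_not_exists_iff :
    (Nonconsecutive D ∧ ¬∃ i, tilingColoring D i = true) ↔ IsAlternating D := by
  simp only [not_exists, tilingColoring_eq_true_iff, not_and, not_not]
  constructor
  · rintro ⟨hD, hcov⟩ i
    refine ⟨fun hi1 hi => hD i hi hi1, fun hi => ?_⟩
    simpa [hi] using hcov (i + 1)
  · intro hD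
    refine ⟨fun d hd hd1 => (hD d).mp hd1 hd, fun i hi => ?_⟩
    simpa [hi] using hD (i - 1)

lemma IsAlternating.add_natCast_mem_iff (hD : IsAlternating D) (x : ZMod n) (k : ℕ) :
    x + k ∈ D ↔ (x ∈ D ↔ Even k) := by
  induction k with
  | zero => simp
  | succ k ih => rw [Nat.cast_succ, ← add_assoc, hD, ih, Nat.even_add_one]; tauto

lemma IsAlternating.even (hD : IsAlternating D) : Even n := by
  have := hD.add_natCast_mem_iff 0 n
  rw [ZMod.natCast_self, add_zero] at this
  tauto

lemma IsAlternating.compl [NeZero n] (hD : IsAlternating D) : IsAlternating Dᶜ := fun i => by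
  simp [hD i]

lemma IsAlternating.eq_of_zero_mem_iff [NeZero n] {D' : Finset (ZMod n)} (hD : IsAlternating D)
    (hD' : IsAlternating D') (h0 : 0 ∈ D ↔ 0 ∈ D') : D = D' := by
  ext x
  have hx := hD.add_natCast_mem_iff 0 x.val
  have hx' := hD'.add_natCast_mem_iff 0 x.val
  rw [zero_add, ZMod.natCast_zmod_val] at hx hx'
  rw [hx, hx', h0]

lemma isAlternating_castHom_eq_zero [NeZero n] (h : 2 ∣ n) :
    IsAlternating (univ.filter fun x : ZMod n => ZMod.castHom h (ZMod 2) x = 0) := by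
  intro i
  simp only [mem_filter, mem_univ, true_and, map_add, map_one]
  generalize ZMod.castHom h (ZMod 2) i = a
  revert a
  decide

lemma card_isAlternating_of_even [NeZero n] (h : Even n) :
    Nat.card {D : Finset (ZMod n) // IsAlternating D} = 2 := by
  classical
  set E := univ.filter fun x : ZMod n => ZMod.castHom h.two_dvd (ZMod 2) x = 0
  have hE : IsAlternating E := isAlternating_castHom_eq_zero h.two_dvd
  have h0E : 0 ∈ E := mem_filter.mpr ⟨mem_univ _, map_zero _⟩
  rw [Nat.card_eq_fintype_card, Fintype.card_subtype, card_eq_two]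
  refine ⟨E, Eᶜ, fun hE' => mem_compl.mp (hE' ▸ h0E) h0E, ?_⟩
  ext D
  simp only [mem_filter, mem_univ, true_and, mem_insert, mem_singleton]
  refine ⟨fun hD => ?_, by rintro (rfl | rfl); exacts [hE, hE.compl]⟩
  by_cases h0 : 0 ∈ D
  · exact Or.inl (hD.eq_of_zero_mem_iff hE (iff_of_true h0 h0E))
  · exact Or.inr (hD.eq_of_zero_mem_iff hE.compl (iff_of_false h0 (by simpa using h0E)))

lemma card_isAlternating_of_odd (h : Odd n) :
    Nat.card {D : Finset (ZMod n) // IsAlternating D} = 0 :=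
  have : IsEmpty {D : Finset (ZMod n) // IsAlternating D} :=
    ⟨fun D => Nat.not_even_iff_odd.mpr h D.2.even⟩
  Nat.card_of_isEmpty

end Alternating

section Counting

variable {n : ℕ}

lemma card_set_nonconsecutive_eq [NeZero n] :
    Nat.card {D : Set (ZMod n) // ∀ d ∈ D, d + 1 ∉ D} =
      Nat.card {D : Finset (ZMod n) // Nonconsecutive D} :=
  (Nat.card_congr (Equiv.subtypeEquiv Fintype.finsetEquivSet fun D => by
    simp [Nonconsecutive])).symm

lemma card_nonconsecutive_eq_card_admissible_add [NeZero n] :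
    Nat.card {D : Finset (ZMod n) // Nonconsecutive D} =
      Nat.card {c : ZMod n → Bool // Admissible 2 n c} +
        Nat.card {D : Finset (ZMod n) // IsAlternating D} := by
  classical
  simp only [← Nat.card_congr tilingEquivAdmissible, Nat.card_eq_fintype_card,
    Fintype.card_subtype]
  rw [← card_filter_add_card_filter_not (s := univ.filter Nonconsecutive)
    (fun D => ∃ i, tilingColoring D i = true), filter_filter, filter_filter]
  simp only [nonconsecutive_and_not_exists_iff]

lemma card_nonconsecutive_zmod_eq_fib (m : ℕ) :
    Nat.card {D : Finset (ZMod (m + 1)) // Nonconsecutive D} = Nat.fib (m + 2) + Nat.fib m := by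
  rw [Nat.card_eq_fintype_card, Fintype.card_subtype, card_nonconsecutive_zmod,
    Nat.add_sub_cancel, card_filter_nonconsecutiveSubsets_range]

end Counting

lemma lucas_eq_fib_add_fib (L : ℕ → ℕ) (hL0 : L 0 = 2) (hL1 : L 1 = 1)
    (hLrec : ∀ n, L (n + 2) = L (n + 1) + L n) : ∀ m, L (m + 1) = Nat.fib (m + 2) + Nat.fib m
  | 0 => by simp [hL1]
  | 1 => by simp [hLrec 0, hL0, hL1, Nat.fib_add_two]
  | m + 2 => by
    rw [hLrec, lucas_eq_fib_add_fib L hL0 hL1 hLrec (m + 1),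
      lucas_eq_fib_add_fib L hL0 hL1 hLrec m, Nat.fib_add_two (n := m + 2),
      Nat.fib_add_two (n := m)]
    ring

/-- The number of `2`-admissible colorings of a cycle of length `n` equals the
number of tilings of the cycle by curved squares and dominoes (a tiling being
recorded by its set `D` of domino-start positions, which must be pairwise
cyclically nonadjacent) when `n` is odd — in which case it also equals the
Lucas number `L n` — and equals that number minus `2` when `n` is even. -/
theorem stmt18 (L : ℕ → ℕ) (hL0 : L 0 = 2) (hL1 : L 1 = 1)
    (hLrec : ∀ n : ℕ, L (n + 2) = L (n + 1) + L n)
    (n : ℕ) (hn : 1 ≤ n) :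
    (Odd n →
      Nat.card {c : ZMod n → Bool // Admissible 2 n c} =
        Nat.card {D : Set (ZMod n) // ∀ d ∈ D, d + 1 ∉ D} ∧
      Nat.card {c : ZMod n → Bool // Admissible 2 n c} = L n) ∧
    (Even n →
      Nat.card {c : ZMod n → Bool // Admissible 2 n c} =
        Nat.card {D : Set (ZMod n) // ∀ d ∈ D, d + 1 ∉ D} - 2) := by
  obtain ⟨m, rfl⟩ : ∃ m, n = m + 1 := ⟨n - 1, by omega⟩
  have hsplit := card_nonconsecutive_eq_card_admissible_add (n := m + 1)
  rw [← card_set_nonconsecutive_eq] at hsplit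
  refine ⟨fun hodd => ?_, fun heven => ?_⟩
  · rw [card_isAlternating_of_odd hodd, add_zero] at hsplit
    refine ⟨hsplit.symm, ?_⟩
    rw [← hsplit, card_set_nonconsecutive_eq, card_nonconsecutive_zmod_eq_fib,
      lucas_eq_fib_add_fib L hL0 hL1 hLrec]
  · rw [card_isAlternating_of_even heven] at hsplit
    omega
end
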